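/- arXiv:2007.10254 — 7 statements merged into one kernel-verified Lean document; each statement's English description precedes it below -/
import Mathlib

section
/- Let A be a real symmetric n×n matrix with n ≥ 2, and let A⁻ = A_{1:(n−1),1:(n−1)} be its leading (n−1)×(n−1) principal submatrix. Let v ∈ ℝⁿ be a unit eigenvector of A with eigenvalue λ, and let w ∈ ℝⁿ⁻¹ be a unit eigenvector of A⁻ with eigenvalue μ. Then |λ − μ| ≥ |vₙ| · |wᵀ A_{1:(n−1), n}|, where vₙ is the last entry of v and A_{1:(n−1), n} ∈ ℝⁿ⁻¹ is the last column of A with its last entry removed. -/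
open Matrix

/-- Euclidean norm of a vector. -/
noncomputable def vnorm {ι : Type*} [Fintype ι] (v : ι → ℝ) : ℝ :=
  Real.sqrt (∑ i, v i ^ 2)

lemma vnorm_one_sum {ι : Type*} [Fintype ι] {v : ι → ℝ} (h : vnorm v = 1) :
    ∑ i, v i ^ 2 = 1 := by
  have h0 : (0:ℝ) ≤ ∑ i, v i ^ 2 := Finset.sum_nonneg fun i _ => sq_nonneg _
  unfold vnorm at h
  nlinarith [Real.sq_sqrt h0]

/-- **Eigenvalue gap via the interlacing column.**
Let `A` be a real symmetric `(n+1)×(n+1)` matrix (`n ≥ 1`), let `A⁻` be its leading `n×n`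
principal submatrix, let `v` be a unit eigenvector of `A` with eigenvalue `λ` and `w` a unit
eigenvector of `A⁻` with eigenvalue `μ`.  Then
`|λ − μ| ≥ |vₙ| · |wᵀ A_{1:n, n+1}|`, where `vₙ` is the last entry of `v` and
`A_{1:n, n+1}` is the last column of `A` with its last entry removed. -/
theorem eigenvalue_gap_lower_bound {n : ℕ} (hn : 1 ≤ n)
    (A : Matrix (Fin (n + 1)) (Fin (n + 1)) ℝ) (hsym : A.IsSymm)
    (lam mu : ℝ) (v : Fin (n + 1) → ℝ) (w : Fin n → ℝ)
    (hv : vnorm v = 1) (hveig : A.mulVec v = lam • v)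
    (hw : vnorm w = 1)
    (hweig : (A.submatrix Fin.castSucc Fin.castSucc).mulVec w = mu • w) :
    |v (Fin.last n)| * |∑ i : Fin n, w i * A (Fin.castSucc i) (Fin.last n)| ≤
      |lam - mu| := by
  set s := ∑ i : Fin n, w i * v (Fin.castSucc i) with hs
  have hAv : ∀ i : Fin (n+1), ∑ j, A i j * v j = lam * v i := by
    intro i
    have := congrFun hveig i
    simpa [Matrix.mulVec, dotProduct, smul_eq_mul] using this
  have hAw : ∀ i : Fin n, ∑ j, A (Fin.castSucc i) (Fin.castSucc j) * w j = mu * w i := by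
    intro i
    have := congrFun hweig i
    simpa [Matrix.mulVec, dotProduct, Matrix.submatrix, smul_eq_mul] using this
  have hsymA : ∀ i j, A i j = A j i := fun i j => (hsym.apply j i)
  -- key identity
  have key : (lam - mu) * s =
      (∑ i : Fin n, w i * A (Fin.castSucc i) (Fin.last n)) * v (Fin.last n) := by
    have h1 : ∑ i : Fin n, w i * ∑ j, A (Fin.castSucc i) j * v j = lam * s := by
      rw [hs, Finset.mul_sum]
      refine Finset.sum_congr rfl fun i _ => ?_
      rw [hAv]; ring
    have h2 : ∑ i : Fin n, w i * ∑ j, A (Fin.castSucc i) j * v j =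
        mu * s + (∑ i : Fin n, w i * A (Fin.castSucc i) (Fin.last n)) * v (Fin.last n) := by
      have expand : ∀ i : Fin n, ∑ j, A (Fin.castSucc i) j * v j =
          (∑ j : Fin n, A (Fin.castSucc i) (Fin.castSucc j) * v (Fin.castSucc j)) +
            A (Fin.castSucc i) (Fin.last n) * v (Fin.last n) := by
        intro i
        rw [Fin.sum_univ_castSucc]
      calc ∑ i : Fin n, w i * ∑ j, A (Fin.castSucc i) j * v j
          = ∑ i : Fin n, (∑ j : Fin n, w i * (A (Fin.castSucc i) (Fin.castSucc j) * v (Fin.castSucc j)))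
              + ∑ i : Fin n, w i * (A (Fin.castSucc i) (Fin.last n) * v (Fin.last n)) := by
            rw [← Finset.sum_add_distrib]
            refine Finset.sum_congr rfl fun i _ => ?_
            rw [expand i, mul_add, Finset.mul_sum]
        _ = mu * s + (∑ i : Fin n, w i * A (Fin.castSucc i) (Fin.last n)) * v (Fin.last n) := by
            congr 1
            · rw [Finset.sum_comm]
              rw [hs, Finset.mul_sum]
              refine Finset.sum_congr rfl fun j _ => ?_
              have : ∑ i : Fin n, w i * (A (Fin.castSucc i) (Fin.castSucc j) * v (Fin.castSucc j))
                  = (∑ i : Fin n, A (Fin.castSucc j) (Fin.castSucc i) * w i) * v (Fin.castSucc j) := by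
                rw [Finset.sum_mul]
                refine Finset.sum_congr rfl fun i _ => ?_
                rw [hsymA (Fin.castSucc i) (Fin.castSucc j)]; ring
              rw [this, hAw]; ring
            · rw [Finset.sum_mul]
              refine Finset.sum_congr rfl fun i _ => ?_
              ring
    nlinarith [h1, h2]
  -- Cauchy-Schwarz: |s| ≤ 1
  have hsumv : ∑ i, v i ^ 2 = 1 := vnorm_one_sum hv
  have hsumw : ∑ i, w i ^ 2 = 1 := vnorm_one_sum hw
  have hvc : ∑ i : Fin n, v (Fin.castSucc i) ^ 2 ≤ 1 := by
    rw [← hsumv, Fin.sum_univ_castSucc]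
    nlinarith [sq_nonneg (v (Fin.last n))]
  have hcs : s ^ 2 ≤ 1 := by
    have h2 : s ^ 2 ≤ (∑ i : Fin n, w i ^ 2) * (∑ i : Fin n, v (Fin.castSucc i) ^ 2) := by
      have := Finset.sum_mul_sq_le_sq_mul_sq Finset.univ w (fun i => v (Fin.castSucc i))
      simpa [hs, sq] using this
    calc s ^ 2 ≤ (∑ i : Fin n, w i ^ 2) * (∑ i : Fin n, v (Fin.castSucc i) ^ 2) := h2
      _ ≤ 1 := by rw [hsumw]; linarith
  have habs_s : |s| ≤ 1 := abs_le_one_iff_mul_self_le_one.mpr (by nlinarith)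
  calc |v (Fin.last n)| * |∑ i : Fin n, w i * A (Fin.castSucc i) (Fin.last n)|
      = |(∑ i : Fin n, w i * A (Fin.castSucc i) (Fin.last n)) * v (Fin.last n)| := by
        rw [abs_mul, mul_comm]
    _ = |(lam - mu) * s| := by rw [key]
    _ = |lam - mu| * |s| := abs_mul _ _
    _ ≤ |lam - mu| * 1 := by
        exact mul_le_mul_of_nonneg_left habs_s (abs_nonneg _)
    _ = |lam - mu| := mul_one _
end

section
/- Let 0 < α < 1 and let λ₁ < λ₂ < … < λ_m be real numbers in the interval [α, α⁻¹] with λ_{i+1} − λ_i ≥ α for all 1 ≤ i < m. Let V be the m×m Vandermonde matrix with V_{ij} = λ_i^{j−1}. Then V is invertible and the minimum singular value of V is at least m⁻¹·2⁻ᵐ·α^{2m}. -/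
open Matrix

/-- Minimum singular value: the minimum of `‖Mx‖₂` over unit vectors `x`. -/
noncomputable def sigmaMin {ι κ' : Type*} [Fintype ι] [Fintype κ']
    (M : Matrix ι κ' ℝ) : ℝ :=
  ⨅ x : {x : κ' → ℝ // vnorm x = 1}, vnorm (M.mulVec x)

open Polynomial in
lemma abs_coeff_prod_X_sub_C_le {ι : Type*} [DecidableEq ι] (s : Finset ι) (c : ι → ℝ) :
    ∀ j : ℕ, |(∏ k ∈ s, (X - C (c k))).coeff j| ≤ ∏ k ∈ s, (1 + |c k|) := by
  induction s using Finset.induction_on with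
  | empty =>
    intro j
    simp only [Finset.prod_empty, Polynomial.coeff_one]
    split <;> simp
  | @insert a s ha ih =>
    intro j
    rw [Finset.prod_insert ha, Finset.prod_insert ha]
    have hnn : 0 ≤ ∏ k ∈ s, (1 + |c k|) := Finset.prod_nonneg fun k _ => by positivity
    have expand : ((X - C (c a)) * ∏ k ∈ s, (X - C (c k))).coeff j
        = (X * ∏ k ∈ s, (X - C (c k))).coeff j - c a * (∏ k ∈ s, (X - C (c k))).coeff j := by
      rw [sub_mul, Polynomial.coeff_sub, Polynomial.coeff_C_mul]
    rw [expand]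
    cases j with
    | zero =>
      rw [Polynomial.mul_coeff_zero, Polynomial.coeff_X_zero, zero_mul, zero_sub, abs_neg, abs_mul]
      have h0 := ih 0
      have := mul_le_mul_of_nonneg_left h0 (abs_nonneg (c a))
      nlinarith [abs_nonneg (c a)]
    | succ n =>
      rw [Polynomial.coeff_X_mul]
      have h1 := ih n
      have h2 := ih (n + 1)
      have htri : |(∏ k ∈ s, (X - C (c k))).coeff n - c a * (∏ k ∈ s, (X - C (c k))).coeff (n+1)|
          ≤ |(∏ k ∈ s, (X - C (c k))).coeff n| + |c a| * |(∏ k ∈ s, (X - C (c k))).coeff (n+1)| := by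
        rw [sub_eq_add_neg]
        refine (abs_add_le _ _).trans ?_
        rw [abs_neg, abs_mul]
      have := mul_le_mul_of_nonneg_left h2 (abs_nonneg (c a))
      nlinarith [abs_nonneg (c a)]


/-- **Minimum singular value of a square Vandermonde matrix with separated nodes.**
If `λ₁ < … < λ_m` lie in `[α, α⁻¹]` with consecutive gaps at least `α` (`0 < α < 1`), then the
Vandermonde matrix `V_{ij} = λ_i^{j−1}` is invertible and its minimum singular value is at
least `m⁻¹·2⁻ᵐ·α^{2m}`. -/
theorem vandermonde_min_singular_value {m : ℕ}
    (α : ℝ) (hα0 : 0 < α) (hα1 : α < 1)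
    (l : Fin m → ℝ) (hmono : StrictMono l)
    (hlo : ∀ i, α ≤ l i) (hhi : ∀ i, l i ≤ α⁻¹)
    (hgap : ∀ (i : Fin m) (h : (i : ℕ) + 1 < m), α ≤ l ⟨(i : ℕ) + 1, h⟩ - l i) :
    IsUnit (Matrix.vandermonde l).det ∧
      (m : ℝ)⁻¹ * (2 : ℝ)⁻¹ ^ m * α ^ (2 * m) ≤ sigmaMin (Matrix.vandermonde l) := by
  constructor
  · rw [Matrix.det_vandermonde, isUnit_iff_ne_zero]
    refine ne_of_gt (Finset.prod_pos fun i _ => Finset.prod_pos fun j hj => ?_)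
    exact sub_pos.mpr (hmono (Finset.mem_Ioi.mp hj))
  rcases Nat.eq_zero_or_pos m with hm | hm
  · subst hm
    norm_num
    exact Real.iInf_nonneg fun _ => Real.sqrt_nonneg _
  -- main case : m ≥ 1
  have hαi : (0:ℝ) < α⁻¹ := inv_pos.mpr hα0
  have h1α : (1:ℝ) ≤ α⁻¹ := le_of_lt ((one_lt_inv₀ hα0).mpr hα1)
  have hm' : (0:ℝ) < m := by exact_mod_cast hm
  haveI : Nonempty (Fin m) := ⟨⟨0, hm⟩⟩
  -- separation of nodes
  have hsepLt : ∀ i k : Fin m, i < k → α ≤ l k - l i := by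
    intro i k hik
    have h1 : (i : ℕ) + 1 < m := lt_of_le_of_lt (Nat.succ_le_of_lt hik) k.isLt
    have h2 : l ⟨(i : ℕ) + 1, h1⟩ ≤ l k := hmono.monotone (by
      rw [Fin.le_def]; exact Nat.succ_le_of_lt hik)
    linarith [hgap i h1]
  have hsep : ∀ i k : Fin m, k ≠ i → α ≤ |l i - l k| := by
    intro i k hik
    rcases lt_or_gt_of_ne hik with h | h
    · rw [abs_of_nonneg (by linarith [hsepLt k i h])]; linarith [hsepLt k i h]
    · rw [abs_sub_comm, abs_of_nonneg (by linarith [hsepLt i k h])]; linarith [hsepLt i k h]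
  set B : ℝ := (2 * α⁻¹ * α⁻¹) ^ (m - 1) with hB
  have hBpos : 0 < B := by positivity
  -- entrywise bound on Lagrange basis coefficients
  have hbasis : ∀ (i : Fin m) (j : ℕ), |(Lagrange.basis Finset.univ l i).coeff j| ≤ B := by
    intro i j
    have hsplit : Lagrange.basis Finset.univ l i
        = Polynomial.C (∏ k ∈ Finset.univ.erase i, (l i - l k)⁻¹) *
          ∏ k ∈ Finset.univ.erase i, (Polynomial.X - Polynomial.C (l k)) := by
      rw [Lagrange.basis]
      simp_rw [Lagrange.basisDivisor]
      rw [Finset.prod_mul_distrib, map_prod]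
    rw [hsplit, Polynomial.coeff_C_mul, abs_mul]
    have hcard : (Finset.univ.erase i).card = m - 1 := by
      rw [Finset.card_erase_of_mem (Finset.mem_univ i), Finset.card_univ, Fintype.card_fin]
    have h1 : |∏ k ∈ Finset.univ.erase i, (l i - l k)⁻¹| ≤ α⁻¹ ^ (m - 1) := by
      rw [Finset.abs_prod, ← hcard, ← Finset.prod_const]
      refine Finset.prod_le_prod (fun k _ => abs_nonneg _) fun k hk => ?_
      rw [abs_inv]
      exact inv_anti₀ hα0 (hsep i k (Finset.mem_erase.mp hk).1)
    have h2 : |(∏ k ∈ Finset.univ.erase i, (Polynomial.X - Polynomial.C (l k))).coeff j|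
        ≤ (2 * α⁻¹) ^ (m - 1) := by
      refine (abs_coeff_prod_X_sub_C_le _ _ j).trans ?_
      rw [← hcard, ← Finset.prod_const]
      refine Finset.prod_le_prod (fun k _ => by positivity) fun k _ => ?_
      rw [abs_of_pos (lt_of_lt_of_le hα0 (hlo k))]
      have := hhi k
      linarith
    calc |∏ k ∈ Finset.univ.erase i, (l i - l k)⁻¹| *
          |(∏ k ∈ Finset.univ.erase i, (Polynomial.X - Polynomial.C (l k))).coeff j|
        ≤ α⁻¹ ^ (m - 1) * (2 * α⁻¹) ^ (m - 1) :=
          mul_le_mul h1 h2 (abs_nonneg _) (by positivity)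
      _ = B := by rw [hB, ← mul_pow]; ring_nf
  -- per-vector lower bound
  have key : ∀ x : Fin m → ℝ, vnorm x = 1 →
      (m : ℝ)⁻¹ * (2 : ℝ)⁻¹ ^ m * α ^ (2 * m) ≤ vnorm ((Matrix.vandermonde l).mulVec x) := by
    intro x hx
    set y := (Matrix.vandermonde l).mulVec x with hy
    have hxsum : ∑ j, x j ^ 2 = 1 := by
      have h0 : (0:ℝ) ≤ ∑ j, x j ^ 2 := Finset.sum_nonneg fun j _ => sq_nonneg _
      have := hx
      unfold vnorm at this
      nlinarith [Real.sq_sqrt h0]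
    obtain ⟨j, -, hj⟩ : ∃ j ∈ Finset.univ, (m : ℝ)⁻¹ ≤ x j ^ 2 := by
      refine Finset.exists_le_of_sum_le Finset.univ_nonempty ?_
      rw [hxsum, Finset.sum_const, Finset.card_univ, Fintype.card_fin, nsmul_eq_mul,
        mul_inv_cancel₀ hm'.ne']
    set P : Polynomial ℝ := ∑ k : Fin m, Polynomial.C (x k) * Polynomial.X ^ (k : ℕ) with hP
    have hPco : ∀ k : Fin m, P.coeff k = x k := by
      intro k
      rw [hP, Polynomial.finset_sum_coeff]
      rw [Finset.sum_eq_single k]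
      · simp
      · intro b _ hbk
        have : (b : ℕ) ≠ (k : ℕ) := fun h => hbk (Fin.ext h)
        simp [Polynomial.coeff_C_mul, Polynomial.coeff_X_pow, Ne.symm this]
      · simp
    have hPeval : ∀ i, P.eval (l i) = y i := by
      intro i
      rw [hP, Polynomial.eval_finset_sum, hy]
      simp only [Matrix.mulVec, Matrix.vandermonde_apply, dotProduct, Polynomial.eval_mul,
        Polynomial.eval_C, Polynomial.eval_pow, Polynomial.eval_X]
      exact Finset.sum_congr rfl fun k _ => mul_comm _ _
    have hPdeg : P.degree < (Finset.univ : Finset (Fin m)).card := by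
      rw [Finset.card_univ, Fintype.card_fin]
      refine lt_of_le_of_lt (Polynomial.degree_sum_le _ _) ?_
      rw [Finset.sup_lt_iff (by exact_mod_cast WithBot.bot_lt_coe m)]
      intro k _
      refine lt_of_le_of_lt (Polynomial.degree_C_mul_X_pow_le _ _) ?_
      exact_mod_cast k.isLt
    have hinj : Set.InjOn l ↑(Finset.univ : Finset (Fin m)) := fun a _ b _ h =>
      hmono.injective h
    have hinterp := Lagrange.eq_interpolate hinj hPdeg
    have hcoeff : x j = ∑ i, P.eval (l i) * (Lagrange.basis Finset.univ l i).coeff j := by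
      conv_lhs => rw [← hPco j, hinterp]
      rw [Lagrange.interpolate_apply, Polynomial.finset_sum_coeff]
      simp [Polynomial.coeff_C_mul]
    have hxj : |x j| ≤ B * ∑ i, |y i| := by
      rw [hcoeff]
      refine (Finset.abs_sum_le_sum_abs _ _).trans ?_
      rw [Finset.mul_sum]
      refine Finset.sum_le_sum fun i _ => ?_
      rw [abs_mul, hPeval]
      calc |y i| * |(Lagrange.basis Finset.univ l i).coeff ↑j|
          ≤ |y i| * B := mul_le_mul_of_nonneg_left (hbasis i j) (abs_nonneg _)
        _ = B * |y i| := mul_comm _ _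
    have hCS : (∑ i, |y i|) ^ 2 ≤ m * ∑ i, y i ^ 2 := by
      have := sq_sum_le_card_mul_sum_sq (s := (Finset.univ : Finset (Fin m)))
        (f := fun i => |y i|)
      simpa [sq_abs, Finset.card_univ] using this
    set S : ℝ := ∑ i, y i ^ 2 with hS
    have hSnn : 0 ≤ S := Finset.sum_nonneg fun i _ => sq_nonneg _
    have hchain : (m : ℝ)⁻¹ ≤ B ^ 2 * (m * S) := by
      have h1 : x j ^ 2 ≤ (B * ∑ i, |y i|) ^ 2 := by
        rw [← sq_abs (x j)]
        exact pow_le_pow_left₀ (abs_nonneg _) hxj 2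
      have h2 : (B * ∑ i, |y i|) ^ 2 = B ^ 2 * (∑ i, |y i|) ^ 2 := by ring
      nlinarith [sq_nonneg B]
    have hSlb : ((B * m)⁻¹) ^ 2 ≤ S := by
      have hmul := mul_le_mul_of_nonneg_left hchain (le_of_lt hm')
      rw [mul_inv_cancel₀ hm'.ne'] at hmul
      rw [inv_pow, ← one_div, div_le_iff₀ (by positivity)]
      calc (1:ℝ) ≤ m * (B ^ 2 * (m * S)) := hmul
        _ = S * (B * m) ^ 2 := by ring
    have hlast : (m : ℝ)⁻¹ * (2 : ℝ)⁻¹ ^ m * α ^ (2 * m) ≤ (B * m)⁻¹ := by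
      obtain ⟨n, rfl⟩ : ∃ n, m = n + 1 := ⟨m - 1, (Nat.succ_pred_eq_of_pos hm).symm⟩
      have hBn : B = (2 * α⁻¹ * α⁻¹) ^ n := by rw [hB]; norm_num
      rw [mul_inv, mul_comm B⁻¹, mul_assoc]
      refine mul_le_mul_of_nonneg_left ?_ (by positivity)
      have hBinv : B⁻¹ = ((2:ℝ)⁻¹ * α ^ 2) ^ n := by
        rw [hBn, ← inv_pow]
        congr 1
        field_simp
      rw [hBinv]
      have hc : (2:ℝ)⁻¹ ^ (n + 1) * α ^ (2 * (n + 1)) = ((2:ℝ)⁻¹ * α ^ 2) ^ (n + 1) := by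
        rw [mul_pow, pow_mul]
      rw [hc]
      refine pow_le_pow_of_le_one (by positivity) ?_ (Nat.le_succ n)
      nlinarith
    refine hlast.trans ?_
    unfold vnorm
    rw [← hS]
    rw [show ((B * m)⁻¹) = Real.sqrt (((B * m)⁻¹) ^ 2) from
      (Real.sqrt_sq (by positivity)).symm]
    exact Real.sqrt_le_sqrt hSlb
  -- conclude via infimum
  have hne : Nonempty {x : Fin m → ℝ // vnorm x = 1} := by
    refine ⟨⟨fun i => if i = (⟨0, hm⟩ : Fin m) then (1:ℝ) else 0, ?_⟩⟩
    unfold vnorm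
    have : ∑ i : Fin m, (if i = (⟨0, hm⟩ : Fin m) then (1:ℝ) else 0) ^ 2 = 1 := by
      rw [Finset.sum_eq_single (⟨0, hm⟩ : Fin m)]
      · simp
      · intro b _ hb; simp [hb]
      · simp
    rw [this, Real.sqrt_one]
  rw [sigmaMin]
  exact le_ciInf fun x => key x.1 x.2
end

section
/- Let n ≥ 2, let 0 < α < n^{−8·log n} be a threshold, and let G be a random n×d matrix whose entries are independent, each with law (h/n)·N(0,1) + (1 − h/n)·δ₀, where 0 < h ≤ n and h·d > 20·n·(log n)·log(1/α). Then every (fixed, deterministic) unit vector w ∈ ℝⁿ having at least d/(40·log n) entries of absolute value at least n^{−4·log n} satisfies P(‖Gᵀw‖₂ < α) < α^{d/5}. -/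
open MeasureTheory ProbabilityTheory Matrix
open scoped ENNReal NNReal

/-- The mixture law `q·N(0,1) + (1−q)·δ₀`. -/
noncomputable def mixLaw (q : ℝ) : Measure ℝ :=
  ENNReal.ofReal q • gaussianReal 0 1 + ENNReal.ofReal (1 - q) • Measure.dirac 0

/-!
The columns of `G` are i.i.d., so `P(‖Gᵀw‖ < α)` is at most `P(|⟨g, w⟩| < α) ^ d` for a single
column `g`. Let `D` be the set of coordinates where `|w i| ≥ τ = n^{-4 log n}`. Either `g` vanishes
on `D`, which has probability `(1 - h/n)^{|D|} ≤ √α` by the density of `w`, or some `g i` with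
`i ∈ D` is a nonzero Gaussian; conditionally on the other coordinates, `⟨g, w⟩` then lands in a
window of length `2α` with probability at most `(h/n) α / τ ≤ √α`, the density of `N(0,1)` being
below `1/2`. Hence a column is short with probability at most `(1 + n)√α`, and
`((1 + n)√α)^d < α^{d/5}` because `α < n^{-8 log n}`.
-/

lemma gaussianPDFReal_le (m : ℝ) (v : ℝ≥0) (x : ℝ) :
    gaussianPDFReal m v x ≤ (√(2 * Real.pi * v))⁻¹ := by
  rw [gaussianPDFReal_def]
  refine mul_le_of_le_one_right (by positivity) (Real.exp_le_one_iff.mpr ?_)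
  exact div_nonpos_of_nonpos_of_nonneg (neg_nonpos.mpr (sq_nonneg _)) (by positivity)

lemma gaussianReal_le_mul_volume (m : ℝ) {v : ℝ≥0} (hv : v ≠ 0) (s : Set ℝ) :
    gaussianReal m v s ≤ ENNReal.ofReal (√(2 * Real.pi * v))⁻¹ * volume s := by
  rw [gaussianReal_apply m hv, ← setLIntegral_const]
  exact lintegral_mono fun x => ENNReal.ofReal_le_ofReal (gaussianPDFReal_le m v x)

lemma inv_sqrt_two_mul_pi_le_half : (√(2 * Real.pi))⁻¹ ≤ 1 / 2 := by
  rw [one_div]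
  refine inv_anti₀ two_pos (Real.le_sqrt_of_sq_le ?_)
  nlinarith [Real.pi_gt_three]

section MixLaw

variable {q : ℝ}

lemma mixLaw_apply (q : ℝ) (s : Set ℝ) :
    mixLaw q s = ENNReal.ofReal q * gaussianReal 0 1 s
      + ENNReal.ofReal (1 - q) * Measure.dirac 0 s := by
  simp [mixLaw]

lemma isProbabilityMeasure_mixLaw (hq0 : 0 ≤ q) (hq1 : q ≤ 1) :
    IsProbabilityMeasure (mixLaw q) := by
  constructor
  rw [mixLaw_apply, measure_univ, measure_univ, mul_one, mul_one,
    ← ENNReal.ofReal_add hq0 (sub_nonneg.mpr hq1), add_sub_cancel, ENNReal.ofReal_one]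

lemma mixLaw_singleton_zero (q : ℝ) : mixLaw q {0} = ENNReal.ofReal (1 - q) := by
  rw [mixLaw_apply, (gaussianReal_absolutelyContinuous 0 one_ne_zero) Real.volume_singleton,
    Measure.dirac_apply_of_mem (Set.mem_singleton 0)]
  simp

lemma mixLaw_ne_zero_abs_mul_add_lt_le (hq : 0 ≤ q) {a : ℝ} (ha : a ≠ 0) (c α : ℝ) :
    mixLaw q {t | t ≠ 0 ∧ |a * t + c| < α} ≤ ENNReal.ofReal (q * α / |a|) := by
  set S := {t : ℝ | t ≠ 0 ∧ |a * t + c| < α}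
  have hS : S ⊆ (a * ·) ⁻¹' Set.Ioo (-α - c) (α - c) := fun t ht => by
    have := abs_lt.mp ht.2
    exact ⟨by linarith, by linarith⟩
  have hdirac : Measure.dirac (0 : ℝ) S = 0 := by simp [Measure.dirac_apply, S]
  have hgauss : gaussianReal 0 1 S ≤ ENNReal.ofReal (1 / 2 * (|a⁻¹| * (2 * α))) := calc
    gaussianReal 0 1 S ≤ ENNReal.ofReal (√(2 * Real.pi * (1 : ℝ≥0)))⁻¹ * volume S :=
      gaussianReal_le_mul_volume 0 one_ne_zero S
    _ ≤ ENNReal.ofReal (1 / 2) * volume ((a * ·) ⁻¹' Set.Ioo (-α - c) (α - c)) := by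
      gcongr
      simpa using inv_sqrt_two_mul_pi_le_half
    _ = ENNReal.ofReal (1 / 2 * (|a⁻¹| * (2 * α))) := by
      rw [Real.volume_preimage_mul_left ha, Real.volume_Ioo, ENNReal.ofReal_mul (by norm_num),
        ENNReal.ofReal_mul (abs_nonneg _)]
      ring_nf
  calc mixLaw q S ≤ ENNReal.ofReal q * ENNReal.ofReal (1 / 2 * (|a⁻¹| * (2 * α))) := by
        rw [mixLaw_apply, hdirac, mul_zero, add_zero]
        gcongr
    _ = ENNReal.ofReal (q * α / |a|) := by
      rw [← ENNReal.ofReal_mul hq, abs_inv]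
      congr 1
      field_simp

end MixLaw

theorem MeasureTheory.Measure.pi_le_of_forall_update_le {ι : Type*} [Fintype ι] [DecidableEq ι]
    {X : ι → Type*} [∀ i, MeasurableSpace (X i)] {μ : ∀ i, Measure (X i)}
    [∀ i, IsProbabilityMeasure (μ i)] {s : Set (∀ i, X i)} (hs : MeasurableSet s) (i : ι)
    {c : ℝ≥0∞} (h : ∀ x, μ i (Function.update x i ⁻¹' s) ≤ c) : Measure.pi μ s ≤ c := by
  have hslice : ∀ x, ∫⁻ t, s.indicator 1 (Function.update x i t) ∂μ i =
      μ i (Function.update x i ⁻¹' s) := fun x =>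
    lintegral_indicator_one (measurable_update x hs)
  calc Measure.pi μ s = ∫⁻ x, s.indicator 1 x ∂Measure.pi μ := (lintegral_indicator_one hs).symm
    _ ≤ ∫⁻ _, c ∂Measure.pi μ := by
      refine lintegral_le_of_lmarginal_le {i} (measurable_one.indicator hs) measurable_const ?_
      intro x
      simp only [lmarginal_singleton, hslice, lintegral_const, measure_univ, mul_one]
      exact h x
    _ = c := by simp

lemma update_dotProduct {ι : Type*} [Fintype ι] [DecidableEq ι] (x w : ι → ℝ) (i : ι) (t : ℝ) :
    Function.update x i t ⬝ᵥ w = x ⬝ᵥ w + (t - x i) * w i := by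
  have : Function.update x i t = x + Pi.single i (t - x i) := by
    ext k
    rcases eq_or_ne k i with rfl | hk <;> simp [*]
  rw [this, add_dotProduct, single_dotProduct]

section ProductOfMixLaw

variable {ι : Type*} [Fintype ι] {q : ℝ} (hq0 : 0 ≤ q) (hq1 : q ≤ 1)
include hq0 hq1

lemma pi_mixLaw_forall_mem_eq_zero (D : Finset ι) :
    Measure.pi (fun _ : ι => mixLaw q) {v | ∀ i ∈ D, v i = 0} =
      ENNReal.ofReal (1 - q) ^ D.card := by
  classical
  have := isProbabilityMeasure_mixLaw hq0 hq1
  have hpi : {v : ι → ℝ | ∀ i ∈ D, v i = 0} =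
      Set.univ.pi (fun i => if i ∈ D then {0} else Set.univ) := by
    ext v
    simp only [Set.mem_ofPred_eq, Set.mem_pi, Set.mem_univ, true_implies]
    refine forall_congr' fun i => ?_
    split_ifs with hi <;> simp [hi]
  rw [hpi, Measure.pi_pi]
  simp only [apply_ite, mixLaw_singleton_zero, measure_univ, Finset.prod_ite_mem,
    Finset.univ_inter, Finset.prod_const]

lemma pi_mixLaw_ne_zero_abs_dotProduct_lt_le {w : ι → ℝ} {i : ι} (hwi : w i ≠ 0) (α : ℝ) :
    Measure.pi (fun _ : ι => mixLaw q) {v | v i ≠ 0 ∧ |v ⬝ᵥ w| < α} ≤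
      ENNReal.ofReal (q * α / |w i|) := by
  classical
  have := isProbabilityMeasure_mixLaw hq0 hq1
  have hmeas : MeasurableSet {v : ι → ℝ | v i ≠ 0 ∧ |v ⬝ᵥ w| < α} :=
    (measurableSet_singleton 0).compl.preimage (measurable_pi_apply i) |>.inter <|
      measurableSet_lt (by fun_prop : Measurable fun v : ι → ℝ => |v ⬝ᵥ w|) measurable_const
  refine Measure.pi_le_of_forall_update_le hmeas i fun x => ?_
  convert mixLaw_ne_zero_abs_mul_add_lt_le hq0 hwi (x ⬝ᵥ w - x i * w i) α using 2
  ext t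
  simp only [Set.mem_preimage, Set.mem_ofPred_eq, Function.update_self, update_dotProduct]
  ring_nf

lemma pi_mixLaw_abs_dotProduct_lt_le (w : ι → ℝ) (D : Finset ι) {τ : ℝ} (hτ : 0 < τ)
    (hD : ∀ i ∈ D, τ ≤ |w i|) {α : ℝ} (hα : 0 ≤ α) :
    Measure.pi (fun _ : ι => mixLaw q) {v | |v ⬝ᵥ w| < α} ≤
      ENNReal.ofReal (1 - q) ^ D.card + D.card * ENNReal.ofReal (q * α / τ) := by
  have hcover : {v : ι → ℝ | |v ⬝ᵥ w| < α} ⊆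
      {v | ∀ i ∈ D, v i = 0} ∪ ⋃ i ∈ D, {v | v i ≠ 0 ∧ |v ⬝ᵥ w| < α} := by
    intro v hv
    by_cases h : ∀ i ∈ D, v i = 0
    · exact Or.inl h
    · push Not at h
      obtain ⟨i, hi, hvi⟩ := h
      exact Or.inr (Set.mem_biUnion hi ⟨hvi, hv⟩)
  have hslice : ∀ i ∈ D, Measure.pi (fun _ : ι => mixLaw q) {v | v i ≠ 0 ∧ |v ⬝ᵥ w| < α} ≤
      ENNReal.ofReal (q * α / τ) := fun i hi =>
    (pi_mixLaw_ne_zero_abs_dotProduct_lt_le hq0 hq1 (abs_pos.mp (hτ.trans_le (hD i hi))) α)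
      |>.trans (ENNReal.ofReal_le_ofReal
        (div_le_div_of_nonneg_left (by positivity) hτ (hD i hi)))
  calc Measure.pi (fun _ : ι => mixLaw q) {v | |v ⬝ᵥ w| < α}
      ≤ Measure.pi (fun _ : ι => mixLaw q) {v | ∀ i ∈ D, v i = 0} +
          ∑ i ∈ D, Measure.pi (fun _ : ι => mixLaw q) {v | v i ≠ 0 ∧ |v ⬝ᵥ w| < α} := by
        refine (measure_mono hcover).trans <| (measure_union_le _ _).trans ?_
        gcongr
        exact measure_biUnion_finset_le D _
    _ ≤ ENNReal.ofReal (1 - q) ^ D.card + D.card * ENNReal.ofReal (q * α / τ) := by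
      rw [pi_mixLaw_forall_mem_eq_zero hq0 hq1, ← nsmul_eq_mul]
      gcongr
      exact Finset.sum_le_card_nsmul D _ _ hslice

end ProductOfMixLaw

lemma one_sub_pow_le_sqrt {q α : ℝ} {m : ℕ} (hq : q ≤ 1) (hα : 0 < α)
    (h : Real.log (1 / α) ≤ 2 * (q * m)) : (1 - q) ^ m ≤ √α := calc
  (1 - q) ^ m ≤ Real.exp (-q) ^ m := pow_le_pow_left₀ (by linarith) (Real.one_sub_le_exp_neg q) m
  _ ≤ Real.exp (Real.log α / 2) := by
    rw [← Real.exp_nat_mul, Real.exp_le_exp]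
    rw [one_div, Real.log_inv] at h
    linarith
  _ = √α := by rw [Real.sqrt_eq_rpow, Real.rpow_def_of_pos hα, div_eq_mul_one_div]

lemma sqrt_le_rpow_neg_four_mul_log {x α : ℝ} (hx : 0 ≤ x) (hα : α ≤ x ^ (-(8 * Real.log x))) :
    √α ≤ x ^ (-(4 * Real.log x)) := by
  have hsq : x ^ (-(8 * Real.log x)) = (x ^ (-(4 * Real.log x))) ^ 2 := by
    rw [← Real.rpow_mul_natCast hx]
    ring_nf
  calc √α ≤ √((x ^ (-(4 * Real.log x))) ^ 2) := Real.sqrt_le_sqrt (hsq ▸ hα)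
    _ = x ^ (-(4 * Real.log x)) := Real.sqrt_sq (by positivity)

lemma log_three_halves_lt : Real.log (3 / 2) < 0.42 := by
  rw [Real.log_lt_iff_lt_exp (by norm_num)]
  calc (3 / 2 : ℝ) < 1.0525 ^ 8 := by norm_num
    _ ≤ Real.exp 0.0525 ^ 8 := by
      gcongr
      linarith [Real.add_one_le_exp (0.0525 : ℝ)]
    _ = Real.exp 0.42 := by rw [← Real.exp_nat_mul]; norm_num

lemma one_add_le_rpow_mul_log {x : ℝ} (hx : 2 ≤ x) : 1 + x ≤ x ^ (12 / 5 * Real.log x) := by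
  have hlog2 : Real.log 2 ≤ Real.log x := Real.log_le_log two_pos hx
  have hlog : Real.log (1 + x) ≤ Real.log (3 / 2) + Real.log x := by
    rw [← Real.log_mul (by norm_num) (by positivity)]
    exact Real.log_le_log (by positivity) (by linarith)
  rw [Real.rpow_def_of_pos (by positivity), ← Real.exp_log (by positivity : 0 < 1 + x),
    Real.exp_le_exp]
  nlinarith [log_three_halves_lt, Real.log_two_gt_d9]

lemma one_add_mul_sqrt_lt_rpow {x α : ℝ} (hx : 2 ≤ x) (hα0 : 0 < α)
    (hα1 : α < x ^ (-(8 * Real.log x))) : (1 + x) * √α < α ^ (5⁻¹ : ℝ) := by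
  have hx0 : 0 < x := by linarith
  have hsplit : √α = α ^ (5⁻¹ : ℝ) * α ^ (3 / 10 : ℝ) := by
    rw [Real.sqrt_eq_rpow, ← Real.rpow_add hα0]; norm_num
  have hsmall : α ^ (3 / 10 : ℝ) < x ^ (-(12 / 5 * Real.log x)) := calc
    α ^ (3 / 10 : ℝ) < (x ^ (-(8 * Real.log x))) ^ (3 / 10 : ℝ) := by gcongr
    _ = x ^ (-(12 / 5 * Real.log x)) := by rw [← Real.rpow_mul hx0.le]; ring_nf
  have hbig : (1 + x) * x ^ (-(12 / 5 * Real.log x)) ≤ 1 := by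
    rw [Real.rpow_neg hx0.le, ← div_eq_mul_inv, div_le_one (by positivity)]
    exact one_add_le_rpow_mul_log hx
  calc (1 + x) * √α = α ^ (5⁻¹ : ℝ) * ((1 + x) * α ^ (3 / 10 : ℝ)) := by rw [hsplit]; ring
    _ < α ^ (5⁻¹ : ℝ) * 1 := by
      gcongr
      exact (mul_lt_mul_of_pos_left hsmall (by positivity)).trans_le hbig
    _ = α ^ (5⁻¹ : ℝ) := mul_one _

lemma one_add_mul_sqrt_pow_lt_rpow {x α : ℝ} (hx : 2 ≤ x) (hα0 : 0 < α)
    (hα1 : α < x ^ (-(8 * Real.log x))) {d : ℕ} (hd : d ≠ 0) :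
    ((1 + x) * √α) ^ d < α ^ ((d : ℝ) / 5) := by
  rw [show (d : ℝ) / 5 = 5⁻¹ * d by ring, Real.rpow_mul_natCast hα0.le]
  exact pow_lt_pow_left₀ (one_add_mul_sqrt_lt_rpow hx hα0 hα1) (by positivity) hd

lemma log_one_div_pos_of_lt_rpow {x α : ℝ} (hx : 1 ≤ x) (hα0 : 0 < α)
    (hα1 : α < x ^ (-(8 * Real.log x))) : 0 < Real.log (1 / α) := by
  have hα1' : α < 1 := hα1.trans_le (Real.rpow_le_one_of_one_le_of_nonpos hx
    (by nlinarith [Real.log_nonneg hx]))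
  exact Real.log_pos (by rw [one_div]; exact (one_lt_inv₀ hα0).mpr hα1')

lemma pi_mixLaw_abs_dotProduct_lt_le_sqrt {n : ℕ} (hn : 0 < n) {q α : ℝ} (hq0 : 0 ≤ q)
    (hq1 : q ≤ 1) (hα0 : 0 < α) (hα1 : α ≤ (n : ℝ) ^ (-(8 * Real.log n))) (w : Fin n → ℝ)
    (hdense : Real.log (1 / α) ≤ 2 * (q *
      ((Finset.univ.filter fun i => (n : ℝ) ^ (-(4 * Real.log n)) ≤ |w i|).card : ℝ))) :
    Measure.pi (fun _ : Fin n => mixLaw q) {v | |v ⬝ᵥ w| < α} ≤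
      ENNReal.ofReal ((1 + n) * √α) := by
  set τ : ℝ := (n : ℝ) ^ (-(4 * Real.log n))
  set D := Finset.univ.filter fun i => τ ≤ |w i|
  have hτ : 0 < τ := by positivity
  have hsqrt : √α ≤ τ := sqrt_le_rpow_neg_four_mul_log n.cast_nonneg hα1
  have hratio : q * α / τ ≤ √α := by
    rw [div_le_iff₀ hτ]
    calc q * α ≤ √α * √α := by
          rw [Real.mul_self_sqrt hα0.le]
          exact mul_le_of_le_one_left hα0.le hq1
      _ ≤ √α * τ := by gcongr
  have hcard : (D.card : ℝ≥0∞) ≤ n := by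
    exact_mod_cast (Finset.card_le_univ D).trans_eq (Fintype.card_fin n)
  calc _ ≤ ENNReal.ofReal (1 - q) ^ D.card + D.card * ENNReal.ofReal (q * α / τ) :=
        pi_mixLaw_abs_dotProduct_lt_le hq0 hq1 w D hτ (fun i hi => (Finset.mem_filter.mp hi).2)
          hα0.le
    _ ≤ ENNReal.ofReal √α + n * ENNReal.ofReal √α := by
      rw [← ENNReal.ofReal_pow (by linarith)]
      gcongr
      exact one_sub_pow_le_sqrt hq1 hα0 hdense
    _ = ENNReal.ofReal ((1 + n) * √α) := by
      rw [← ENNReal.ofReal_natCast, ← ENNReal.ofReal_mul (by positivity),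
        ← ENNReal.ofReal_add (by positivity) (by positivity)]
      ring_nf

theorem ProbabilityTheory.iIndepFun.map_columns_eq_pi {Ω ι κ X : Type*} [MeasurableSpace Ω]
    {μ : Measure Ω} [Fintype ι] [Fintype κ] [MeasurableSpace X] {G : Ω → ι → κ → X}
    (hmeas : ∀ i j, Measurable fun ω => G ω i j)
    (hindep : iIndepFun (fun (e : ι × κ) ω => G ω e.1 e.2) μ) :
    μ.map (fun ω j i => G ω i j) = Measure.pi fun j => Measure.pi fun i => μ.map (G · i j) := by
  have := hindep.isProbabilityMeasure
  have : ∀ i j, IsProbabilityMeasure (μ.map (G · i j)) :=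
    fun i j => Measure.isProbabilityMeasure_map (hmeas i j).aemeasurable
  have hswap : iIndepFun (fun (e : κ × ι) ω => G ω e.2 e.1) μ :=
    hindep.precomp Prod.swap_injective
  have hcurry : (fun ω j i => G ω i j) = MeasurableEquiv.curry κ ι X ∘ fun ω e => G ω e.2 e.1 :=
    rfl
  have hpi := hswap.map_fun_eq_pi_map fun (e : κ × ι) => (hmeas e.2 e.1).aemeasurable
  rw [hcurry, ← Measure.map_map (MeasurableEquiv.measurable _) (by fun_prop), hpi,
    ← Measure.infinitePi_eq_pi, Measure.infinitePi_map_curry (fun j i => μ.map (G · i j))]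
  simp only [Measure.infinitePi_eq_pi]

lemma abs_le_vnorm {ι : Type*} [Fintype ι] (v : ι → ℝ) (i : ι) : |v i| ≤ vnorm v := by
  rw [← Real.sqrt_sq_eq_abs]
  exact Real.sqrt_le_sqrt (Finset.single_le_sum (fun j _ => sq_nonneg (v j)) (Finset.mem_univ i))

theorem measure_vnorm_transpose_mulVec_lt_le {Ω ι κ : Type*} [MeasurableSpace Ω]
    {μ : Measure Ω} [Fintype ι] [Fintype κ] {G : Ω → Matrix ι κ ℝ}
    (hmeas : ∀ i j, Measurable fun ω => G ω i j)
    (hindep : iIndepFun (fun (e : ι × κ) ω => G ω e.1 e.2) μ) {ν : Measure ℝ} [SigmaFinite ν]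
    (hlaw : ∀ i j, μ.map (G · i j) = ν) (w : ι → ℝ) (α : ℝ) :
    μ {ω | vnorm ((G ω)ᵀ *ᵥ w) < α} ≤
      Measure.pi (fun _ : ι => ν) {v | |v ⬝ᵥ w| < α} ^ Fintype.card κ := by
  have hA : MeasurableSet {v : ι → ℝ | |v ⬝ᵥ w| < α} :=
    measurableSet_lt (by fun_prop : Measurable fun v : ι → ℝ => |v ⬝ᵥ w|) measurable_const
  have hsub : {ω | vnorm ((G ω)ᵀ *ᵥ w) < α} ⊆
      (fun ω j i => G ω i j) ⁻¹' Set.univ.pi fun _ => {v | |v ⬝ᵥ w| < α} :=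
    fun ω hω j _ => (abs_le_vnorm _ j).trans_lt hω
  calc μ {ω | vnorm ((G ω)ᵀ *ᵥ w) < α}
      ≤ μ.map (fun ω j i => G ω i j) (Set.univ.pi fun _ => {v | |v ⬝ᵥ w| < α}) := by
        rw [Measure.map_apply (by fun_prop) (.univ_pi fun _ => hA)]
        exact measure_mono hsub
    _ = Measure.pi (fun _ : ι => ν) {v | |v ⬝ᵥ w| < α} ^ Fintype.card κ := by
        simp only [hindep.map_columns_eq_pi hmeas, hlaw]
        rw [Measure.pi_pi, Finset.prod_const, Finset.card_univ]

theorem sparse_gaussian_clobbers_dense_vector_general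
    {Ω : Type*} [MeasurableSpace Ω] (μ : Measure Ω) [IsProbabilityMeasure μ]
    (n d : ℕ) (hn : 2 ≤ n)
    (α : ℝ) (hα0 : 0 < α) (hα1 : α < (n : ℝ) ^ (-(8 * Real.log n)))
    (h : ℝ) (hh0 : 0 < h) (hhn : h ≤ n)
    (hhd : 20 * n * Real.log n * Real.log (1 / α) < h * d)
    (G : Ω → Matrix (Fin n) (Fin d) ℝ)
    (hGmeas : ∀ i j, Measurable fun ω => G ω i j)
    (hGindep : iIndepFun
      (fun (e : Fin n × Fin d) (ω : Ω) => G ω e.1 e.2) μ)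
    (hGlaw : ∀ i j, Measure.map (fun ω => G ω i j) μ = mixLaw (h / n))
    (w : Fin n → ℝ)
    (hwdense : (d : ℝ) / (40 * Real.log n) ≤
      ((Finset.univ.filter fun i => (n : ℝ) ^ (-(4 * Real.log n)) ≤ |w i|).card : ℝ)) :
    μ {ω | vnorm ((G ω)ᵀ.mulVec w) < α} < ENNReal.ofReal (α ^ ((d : ℝ) / 5)) := by
  have hn2 : (2 : ℝ) ≤ n := by exact_mod_cast hn
  have hlogn : 0 < Real.log n := Real.log_pos (by linarith)
  have hlogα : 0 < Real.log (1 / α) := log_one_div_pos_of_lt_rpow (by linarith) hα0 hα1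
  have hd : d ≠ 0 := by
    rintro rfl
    have : 0 < 20 * n * Real.log n * Real.log (1 / α) := by positivity
    simp only [Nat.cast_zero, mul_zero] at hhd
    linarith
  have hq0 : 0 ≤ h / n := by positivity
  have hq1 : h / n ≤ 1 := div_le_one_of_le₀ hhn (by positivity)
  have := isProbabilityMeasure_mixLaw hq0 hq1
  have hdense : Real.log (1 / α) ≤ 2 * (h / n *
      ((Finset.univ.filter fun i => (n : ℝ) ^ (-(4 * Real.log n)) ≤ |w i|).card : ℝ)) := calc
    Real.log (1 / α) ≤ h * d / (20 * n * Real.log n) := by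
      rw [le_div_iff₀ (by positivity)]; linarith
    _ = 2 * (h / n * (d / (40 * Real.log n))) := by field_simp; ring
    _ ≤ _ := by gcongr
  calc μ {ω | vnorm ((G ω)ᵀ.mulVec w) < α}
      ≤ Measure.pi (fun _ => mixLaw (h / n)) {v | |v ⬝ᵥ w| < α} ^ Fintype.card (Fin d) :=
        measure_vnorm_transpose_mulVec_lt_le hGmeas hGindep hGlaw w α
    _ ≤ ENNReal.ofReal ((1 + n) * √α) ^ d := by
      rw [Fintype.card_fin]
      gcongr
      exact pi_mixLaw_abs_dotProduct_lt_le_sqrt (by omega) hq0 hq1 hα0 hα1.le w hdense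
    _ < ENNReal.ofReal (α ^ ((d : ℝ) / 5)) := by
      rw [← ENNReal.ofReal_pow (by positivity), ENNReal.ofReal_lt_ofReal_iff (by positivity)]
      exact one_add_mul_sqrt_pow_lt_rpow hn2 hα0 hα1 hd

/-- **A sparse Gaussian matrix clobbers any fixed dense vector.**
Let `n ≥ 2`, `0 < α < n^{−8·log n}`, `0 < h ≤ n` with `h·d > 20·n·(log n)·log(1/α)`, and let
`G` be a random `n×d` matrix with independent entries of law `(h/n)·N(0,1) + (1 − h/n)·δ₀`.
Then any fixed unit vector `w ∈ ℝⁿ` with at least `d/(40·log n)` entries of absolute value at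
least `n^{−4·log n}` satisfies `P(‖Gᵀw‖₂ < α) < α^{d/5}`. -/
theorem sparse_gaussian_clobbers_dense_vector
    {Ω : Type*} [MeasurableSpace Ω] (μ : Measure Ω) [IsProbabilityMeasure μ]
    (n d : ℕ) (hn : 2 ≤ n)
    (α : ℝ) (hα0 : 0 < α) (hα1 : α < (n : ℝ) ^ (-(8 * Real.log n)))
    (h : ℝ) (hh0 : 0 < h) (hhn : h ≤ n)
    (hhd : 20 * n * Real.log n * Real.log (1 / α) < h * d)
    (G : Ω → Matrix (Fin n) (Fin d) ℝ)
    (hGmeas : ∀ i j, Measurable fun ω => G ω i j)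
    (hGindep : iIndepFun
      (fun (e : Fin n × Fin d) (ω : Ω) => G ω e.1 e.2) μ)
    (hGlaw : ∀ i j, Measure.map (fun ω => G ω i j) μ = mixLaw (h / n))
    (w : Fin n → ℝ) (hw : vnorm w = 1)
    (hwdense : (d : ℝ) / (40 * Real.log n) ≤
      ((Finset.univ.filter fun i => (n : ℝ) ^ (-(4 * Real.log n)) ≤ |w i|).card : ℝ)) :
    μ {ω | vnorm ((G ω)ᵀ.mulVec w) < α} < ENNReal.ofReal (α ^ ((d : ℝ) / 5)) :=
  sparse_gaussian_clobbers_dense_vector_general μ n d hn α hα0 hα1 h hh0 hhn hhd G hGmeas hGindep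
    hGlaw w hwdense
end

section
/- Fix a shift value s ≥ 1 and let Δ(s) be the n×n real matrix with (Δ(s))_{ij} = 1 if i = j + s and 0 otherwise. For every invertible n×n real matrix M, rank(M − Δ(s)·M·Δ(s)ᵀ) = rank(M⁻¹ − Δ(s)ᵀ·M⁻¹·Δ(s)); that is, the s⁺-displacement rank of M equals the s⁻-displacement rank of M⁻¹. -/
open Matrix

/-- The `n×n` shift-down-by-`s` matrix: `(Δ(s))_{ij} = 1` iff `i = j + s`. -/
def shiftMatrix (n s : ℕ) : Matrix (Fin n) (Fin n) ℝ :=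
  Matrix.of fun i j => if (i : ℕ) = (j : ℕ) + s then 1 else 0

/-- General displacement-rank identity: for invertible `M` and arbitrary `B`, `C`,
`rank(M − B·M·C) = rank(M⁻¹ − C·M⁻¹·B)`. -/
lemma rank_sub_displacement {n : ℕ} (M B C : Matrix (Fin n) (Fin n) ℝ)
    (hM : IsUnit M.det) :
    (M - B * M * C).rank = (M⁻¹ - C * M⁻¹ * B).rank := by
  set X : Matrix (Fin n) (Fin n) ℝ := M - B * M * C with hX
  set Y : Matrix (Fin n) (Fin n) ℝ := M⁻¹ - C * M⁻¹ * B with hY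
  have hMl : M⁻¹ * M = 1 := nonsing_inv_mul M hM
  have hMr : M * M⁻¹ = 1 := mul_nonsing_inv M hM
  have memY : ∀ v, v ∈ LinearMap.ker Y.mulVecLin ↔ M⁻¹ *ᵥ v = (C * M⁻¹ * B) *ᵥ v := by
    intro v
    rw [LinearMap.mem_ker, mulVecLin_apply, hY, sub_mulVec, sub_eq_zero]
  have memX : ∀ v, v ∈ LinearMap.ker X.mulVecLin ↔ M *ᵥ v = (B * M * C) *ᵥ v := by
    intro v
    rw [LinearMap.mem_ker, mulVecLin_apply, hX, sub_mulVec, sub_eq_zero]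
  -- the two kernels are isomorphic
  have hfmem : ∀ v ∈ LinearMap.ker Y.mulVecLin,
      (M⁻¹ * B).mulVecLin v ∈ LinearMap.ker X.mulVecLin := by
    intro v hv
    have hv' := (memY v).mp hv
    rw [memX, mulVecLin_apply, mulVec_mulVec, mulVec_mulVec]
    have e1 : M * (M⁻¹ * B) = B := by rw [← mul_assoc, hMr, one_mul]
    have e2 : B * M * C * (M⁻¹ * B) = B * M * (C * M⁻¹ * B) := by
      simp only [mul_assoc]
    rw [e1, e2, ← mulVec_mulVec, ← hv', mulVec_mulVec, mul_assoc, hMr, mul_one]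
  have hgmem : ∀ v ∈ LinearMap.ker X.mulVecLin,
      (M * C).mulVecLin v ∈ LinearMap.ker Y.mulVecLin := by
    intro v hv
    have hv' := (memX v).mp hv
    rw [memY, mulVecLin_apply, mulVec_mulVec, mulVec_mulVec]
    have e1 : M⁻¹ * (M * C) = C := by rw [← mul_assoc, hMl, one_mul]
    have e2 : C * M⁻¹ * B * (M * C) = C * M⁻¹ * (B * M * C) := by
      simp only [mul_assoc]
    rw [e1, e2, ← mulVec_mulVec, ← hv', mulVec_mulVec, mul_assoc, hMl, mul_one]
  let f := ((M⁻¹ * B).mulVecLin).restrict hfmem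
  let g := ((M * C).mulVecLin).restrict hgmem
  have hgf : ∀ v, g (f v) = v := by
    rintro ⟨v, hv⟩
    have hv' := (memY v).mp hv
    apply Subtype.ext
    show (M * C) *ᵥ ((M⁻¹ * B) *ᵥ v) = v
    rw [mulVec_mulVec]
    have e1 : M * C * (M⁻¹ * B) = M * (C * M⁻¹ * B) := by simp only [mul_assoc]
    rw [e1, ← mulVec_mulVec, ← hv', mulVec_mulVec, hMr, one_mulVec]
  have hfg : ∀ v, f (g v) = v := by
    rintro ⟨v, hv⟩
    have hv' := (memX v).mp hv
    apply Subtype.ext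
    show (M⁻¹ * B) *ᵥ ((M * C) *ᵥ v) = v
    rw [mulVec_mulVec]
    have e1 : M⁻¹ * B * (M * C) = M⁻¹ * (B * M * C) := by simp only [mul_assoc]
    rw [e1, ← mulVec_mulVec, ← hv', mulVec_mulVec, hMl, one_mulVec]
  let e : (LinearMap.ker Y.mulVecLin) ≃ₗ[ℝ] (LinearMap.ker X.mulVecLin) :=
    { f with invFun := g, left_inv := hgf, right_inv := hfg }
  have hker : Module.finrank ℝ (LinearMap.ker Y.mulVecLin) =
      Module.finrank ℝ (LinearMap.ker X.mulVecLin) := e.finrank_eq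
  have hXrn := LinearMap.finrank_range_add_finrank_ker X.mulVecLin
  have hYrn := LinearMap.finrank_range_add_finrank_ker Y.mulVecLin
  have hn : Module.finrank ℝ (Fin n → ℝ) = n := Module.finrank_fin_fun ℝ
  rw [hn] at hXrn hYrn
  show Module.finrank ℝ (LinearMap.range X.mulVecLin) =
    Module.finrank ℝ (LinearMap.range Y.mulVecLin)
  omega

/-- **Displacement rank of the inverse.**
For any invertible `n×n` real matrix `M` and shift `s ≥ 1`, the `s⁺`-displacement rank of `M`
equals the `s⁻`-displacement rank of `M⁻¹`:
`rank(M − Δ(s)·M·Δ(s)ᵀ) = rank(M⁻¹ − Δ(s)ᵀ·M⁻¹·Δ(s))`. -/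
theorem displacement_rank_inverse {n s : ℕ} (hs : 1 ≤ s)
    (M : Matrix (Fin n) (Fin n) ℝ) (hM : IsUnit M.det) :
    (M - shiftMatrix n s * M * (shiftMatrix n s)ᵀ).rank =
      (M⁻¹ - (shiftMatrix n s)ᵀ * M⁻¹ * shiftMatrix n s).rank := by
  exact rank_sub_displacement M (shiftMatrix n s) (shiftMatrix n s)ᵀ hM
end

section
/- Fix a shift value s ≥ 1 and let Δ(s) be the n×n shift-down-by-s matrix. Let M be an n×n real symmetric invertible matrix, let C̄ = {1,…,k} be a prefix of the indices and C = {k+1,…,n} the complementary suffix, and assume the principal submatrix M_{C̄C̄} is invertible. Then both the leading principal submatrix M_{C̄C̄} and the Schur complement SC(M, C) = M_{CC} − M_{CC̄}·M_{C̄C̄}⁻¹·M_{C̄C} have s⁺-displacement rank at most the s⁺-displacement rank of M; that is, rank(M_{C̄C̄} − Δ(s)·M_{C̄C̄}·Δ(s)ᵀ) ≤ rank(M − Δ(s)·M·Δ(s)ᵀ) and rank(SC(M,C) − Δ(s)·SC(M,C)·Δ(s)ᵀ) ≤ rank(M − Δ(s)·M·Δ(s)ᵀ), where in each inequality Δ(s)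 denotes the shift-down-by-s matrix of the appropriate dimension. -/
open Matrix

/-- The positive displacement `s⁺(M) = M − Δ(s)·M·Δ(s)ᵀ`. -/
def dispPlus {n : ℕ} (s : ℕ) (M : Matrix (Fin n) (Fin n) ℝ) :
    Matrix (Fin n) (Fin n) ℝ :=
  M - shiftMatrix n s * M * (shiftMatrix n s)ᵀ

/-- The Schur complement of a `(k+l)×(k+l)` matrix onto the trailing `l` indices:
`SC(M, C) = M_{CC} − M_{CC̄}·M_{C̄C̄}⁻¹·M_{C̄C}` for the prefix `C̄ = {1,…,k}` and suffix
`C = {k+1,…,k+l}`. -/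
noncomputable def schurSuffix {k l : ℕ}
    (M : Matrix (Fin (k + l)) (Fin (k + l)) ℝ) : Matrix (Fin l) (Fin l) ℝ :=
  M.submatrix (Fin.natAdd k) (Fin.natAdd k) -
    M.submatrix (Fin.natAdd k) (Fin.castAdd l) *
      (M.submatrix (Fin.castAdd l) (Fin.castAdd l))⁻¹ *
        M.submatrix (Fin.castAdd l) (Fin.natAdd k)

/-! ### Auxiliary material -/

/-- The negative displacement `M − Δ(s)ᵀ·M·Δ(s)`. -/
def dispMinus {n : ℕ} (s : ℕ) (M : Matrix (Fin n) (Fin n) ℝ) :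
    Matrix (Fin n) (Fin n) ℝ :=
  M - (shiftMatrix n s)ᵀ * M * shiftMatrix n s

lemma shift_mul_apply {n : ℕ} (s : ℕ) (X : Matrix (Fin n) (Fin n) ℝ) (i j : Fin n) :
    (shiftMatrix n s * X) i j =
      if h : s ≤ (i : ℕ) then X ⟨i - s, by omega⟩ j else 0 := by
  rw [Matrix.mul_apply]
  split_ifs with h
  · rw [Finset.sum_eq_single (⟨i - s, by omega⟩ : Fin n)]
    · simp [shiftMatrix, Nat.sub_add_cancel h]
    · intro a _ ha
      have : (i : ℕ) ≠ (a : ℕ) + s := by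
        intro hc; apply ha; apply Fin.ext; simp; omega
      simp [shiftMatrix, this]
    · simp
  · apply Finset.sum_eq_zero
    intro a _
    have : (i : ℕ) ≠ (a : ℕ) + s := by omega
    simp [shiftMatrix, this]

lemma mul_shiftT_apply {n : ℕ} (s : ℕ) (X : Matrix (Fin n) (Fin n) ℝ) (i j : Fin n) :
    (X * (shiftMatrix n s)ᵀ) i j =
      if h : s ≤ (j : ℕ) then X i ⟨j - s, by omega⟩ else 0 := by
  rw [Matrix.mul_apply]
  split_ifs with h
  · rw [Finset.sum_eq_single (⟨j - s, by omega⟩ : Fin n)]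
    · simp [shiftMatrix, Nat.sub_add_cancel h]
    · intro a _ ha
      have : (j : ℕ) ≠ (a : ℕ) + s := by
        intro hc; apply ha; apply Fin.ext; simp; omega
      simp [shiftMatrix, this]
    · simp
  · apply Finset.sum_eq_zero
    intro a _
    have : (j : ℕ) ≠ (a : ℕ) + s := by omega
    simp [shiftMatrix, this]

lemma shiftT_mul_apply {n : ℕ} (s : ℕ) (X : Matrix (Fin n) (Fin n) ℝ) (i j : Fin n) :
    ((shiftMatrix n s)ᵀ * X) i j =
      if h : (i : ℕ) + s < n then X ⟨i + s, h⟩ j else 0 := by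
  rw [Matrix.mul_apply]
  split_ifs with h
  · rw [Finset.sum_eq_single (⟨i + s, h⟩ : Fin n)]
    · simp [shiftMatrix]
    · intro a _ ha
      have : (a : ℕ) ≠ (i : ℕ) + s := by
        intro hc; apply ha; apply Fin.ext; simp; omega
      simp [shiftMatrix, this]
    · simp
  · apply Finset.sum_eq_zero
    intro a _
    have : (a : ℕ) ≠ (i : ℕ) + s := by have := a.isLt; omega
    simp [shiftMatrix, this]

lemma mul_shift_apply {n : ℕ} (s : ℕ) (X : Matrix (Fin n) (Fin n) ℝ) (i j : Fin n) :
    (X * shiftMatrix n s) i j =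
      if h : (j : ℕ) + s < n then X i ⟨j + s, h⟩ else 0 := by
  rw [Matrix.mul_apply]
  split_ifs with h
  · rw [Finset.sum_eq_single (⟨j + s, h⟩ : Fin n)]
    · simp [shiftMatrix]
    · intro a _ ha
      have : (a : ℕ) ≠ (j : ℕ) + s := by
        intro hc; apply ha; apply Fin.ext; simp; omega
      simp [shiftMatrix, this]
    · simp
  · apply Finset.sum_eq_zero
    intro a _
    have : (a : ℕ) ≠ (j : ℕ) + s := by have := a.isLt; omega
    simp [shiftMatrix, this]

lemma dispPlus_apply {n : ℕ} (s : ℕ) (X : Matrix (Fin n) (Fin n) ℝ) (i j : Fin n) :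
    dispPlus s X i j = X i j -
      if h : s ≤ (i : ℕ) ∧ s ≤ (j : ℕ) then X ⟨i - s, by omega⟩ ⟨j - s, by omega⟩ else 0 := by
  simp only [dispPlus, Matrix.sub_apply, mul_shiftT_apply, shift_mul_apply]
  congr 1
  split_ifs with h1 h2 h3 h2 <;> first | rfl | omega

lemma dispMinus_apply {n : ℕ} (s : ℕ) (X : Matrix (Fin n) (Fin n) ℝ) (i j : Fin n) :
    dispMinus s X i j = X i j -
      if h : (i : ℕ) + s < n ∧ (j : ℕ) + s < n then X ⟨i + s, h.1⟩ ⟨j + s, h.2⟩ else 0 := by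
  simp only [dispMinus, Matrix.sub_apply, mul_shift_apply, shiftT_mul_apply]
  congr 1
  split_ifs with h1 h2 h3 h2 <;> first | rfl | omega

lemma dispPlus_submatrix_castAdd {k l : ℕ} (s : ℕ)
    (M : Matrix (Fin (k + l)) (Fin (k + l)) ℝ) :
    dispPlus s (M.submatrix (Fin.castAdd l) (Fin.castAdd l)) =
      (dispPlus s M).submatrix (Fin.castAdd l) (Fin.castAdd l) := by
  ext i j
  rw [Matrix.submatrix_apply, dispPlus_apply, dispPlus_apply, Matrix.submatrix_apply]
  simp only [Matrix.submatrix_apply, Fin.coe_castAdd]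
  split_ifs with h
  · congr 1
  · rfl

lemma dispMinus_submatrix_natAdd {k l : ℕ} (s : ℕ)
    (M : Matrix (Fin (k + l)) (Fin (k + l)) ℝ) :
    dispMinus s (M.submatrix (Fin.natAdd k) (Fin.natAdd k)) =
      (dispMinus s M).submatrix (Fin.natAdd k) (Fin.natAdd k) := by
  ext i j
  rw [Matrix.submatrix_apply, dispMinus_apply, dispMinus_apply, Matrix.submatrix_apply]
  have hi : ((Fin.natAdd k i : Fin (k + l)) : ℕ) = k + (i : ℕ) := rfl
  have hj : ((Fin.natAdd k j : Fin (k + l)) : ℕ) = k + (j : ℕ) := rfl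
  congr 1
  split_ifs with h1 h2 h2
  · rw [Matrix.submatrix_apply]
    congr 1 <;> apply Fin.ext <;> simp [Fin.natAdd, hi, hj] <;> omega
  · exact absurd ⟨by omega, by omega⟩ h2
  · exact absurd ⟨by omega, by omega⟩ h1
  · rfl

lemma finrank_ker_le {n : ℕ} (U V : Matrix (Fin n) (Fin n) ℝ) :
    Module.finrank ℝ (LinearMap.ker (1 - U * V).mulVecLin) ≤
      Module.finrank ℝ (LinearMap.ker (1 - V * U).mulVecLin) := by
  have hmem : ∀ (A B : Matrix (Fin n) (Fin n) ℝ) (x : Fin n → ℝ),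
      x ∈ LinearMap.ker (1 - A * B).mulVecLin ↔ A *ᵥ (B *ᵥ x) = x := by
    intro A B x
    rw [LinearMap.mem_ker, Matrix.mulVecLin_apply, Matrix.sub_mulVec,
      Matrix.one_mulVec, ← Matrix.mulVec_mulVec, sub_eq_zero]
    exact eq_comm
  have hker : ∀ x : Fin n → ℝ, x ∈ LinearMap.ker (1 - U * V).mulVecLin →
      V *ᵥ x ∈ LinearMap.ker (1 - V * U).mulVecLin := by
    intro x hx
    rw [hmem] at hx ⊢
    rw [show U *ᵥ (V *ᵥ x) = x from hx]
  let f : LinearMap.ker (1 - U * V).mulVecLin →ₗ[ℝ] LinearMap.ker (1 - V * U).mulVecLin :=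
    LinearMap.codRestrict _ (V.mulVecLin.comp (LinearMap.ker (1 - U * V).mulVecLin).subtype)
      (fun x => hker x x.2)
  apply LinearMap.finrank_le_finrank_of_injective (f := f)
  intro x y hxy
  have hV : V *ᵥ (x : Fin n → ℝ) = V *ᵥ (y : Fin n → ℝ) := by
    have := congrArg (Subtype.val) hxy
    simpa [f, LinearMap.codRestrict, Matrix.mulVecLin_apply] using this
  have hx := (hmem U V x).mp x.2
  have hy := (hmem U V y).mp y.2
  apply Subtype.ext
  rw [← hx, ← hy, hV]

lemma rank_one_sub_mul_comm {n : ℕ} (U V : Matrix (Fin n) (Fin n) ℝ) :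
    (1 - U * V).rank = (1 - V * U).rank := by
  have h1 := LinearMap.finrank_range_add_finrank_ker (1 - U * V).mulVecLin
  have h2 := LinearMap.finrank_range_add_finrank_ker (1 - V * U).mulVecLin
  have e1 := finrank_ker_le U V
  have e2 := finrank_ker_le V U
  have hr1 : (1 - U * V).rank = Module.finrank ℝ (LinearMap.range (1 - U * V).mulVecLin) := rfl
  have hr2 : (1 - V * U).rank = Module.finrank ℝ (LinearMap.range (1 - V * U).mulVecLin) := rfl
  simp only [Module.finrank_fintype_fun_eq_card, Fintype.card_fin] at h1 h2
  omega

lemma rank_mul_unit_left {n : ℕ} (P X : Matrix (Fin n) (Fin n) ℝ) (hP : IsUnit P.det) :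
    (P * X).rank = X.rank := by
  apply le_antisymm (Matrix.rank_mul_le_right _ _)
  calc X.rank = (P⁻¹ * (P * X)).rank := by
        rw [← Matrix.mul_assoc, Matrix.nonsing_inv_mul _ hP, Matrix.one_mul]
    _ ≤ (P * X).rank := Matrix.rank_mul_le_right _ _

/-- For invertible `M`, `rank (M − A·M·B) = rank (M⁻¹ − B·M⁻¹·A)`. -/
lemma rank_sub_conj {n : ℕ} (M A B : Matrix (Fin n) (Fin n) ℝ) (hM : IsUnit M.det) :
    (M - A * M * B).rank = (M⁻¹ - B * M⁻¹ * A).rank := by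
  have h1 : M - A * M * B = M * (1 - (M⁻¹ * A) * (M * B)) := by
    rw [Matrix.mul_sub, Matrix.mul_one]
    congr 1
    rw [show M * (M⁻¹ * A * (M * B)) = (M * M⁻¹) * (A * (M * B)) by
      simp only [Matrix.mul_assoc], Matrix.mul_nonsing_inv _ hM, Matrix.one_mul,
      ← Matrix.mul_assoc]
  have h2 : 1 - (M * B) * (M⁻¹ * A) = M * (M⁻¹ - B * M⁻¹ * A) := by
    rw [Matrix.mul_sub, Matrix.mul_nonsing_inv _ hM]
    congr 1
    simp only [Matrix.mul_assoc]
  rw [h1, rank_mul_unit_left _ _ hM, rank_one_sub_mul_comm, h2, rank_mul_unit_left _ _ hM]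

lemma rank_submatrix_le' {n m k : ℕ} (X : Matrix (Fin n) (Fin n) ℝ) (f : Fin m → Fin n)
    (g : Fin k → Fin n) : (X.submatrix f g).rank ≤ X.rank := by
  have h : X.submatrix f g =
      ((1 : Matrix (Fin n) (Fin n) ℝ).submatrix f id) * X *
        ((1 : Matrix (Fin n) (Fin n) ℝ).submatrix id g) := by
    ext i j
    rw [Matrix.mul_apply]
    rw [Finset.sum_eq_single (g j)]
    · rw [Matrix.mul_apply, Finset.sum_eq_single (f i)] <;>
        simp +contextual [Matrix.one_apply, Ne, eq_comm]
    · simp +contextual [Matrix.one_apply, Ne, eq_comm]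
    · simp
  rw [h]
  exact le_trans (Matrix.rank_mul_le_left _ _) (Matrix.rank_mul_le_right _ _)

lemma schur_facts {k l : ℕ} (M : Matrix (Fin (k + l)) (Fin (k + l)) ℝ)
    (hM : IsUnit M.det)
    (hMbb : IsUnit (M.submatrix (Fin.castAdd l) (Fin.castAdd l)).det) :
    IsUnit (schurSuffix M).det ∧
      M⁻¹.submatrix (Fin.natAdd k) (Fin.natAdd k) = (schurSuffix M)⁻¹ := by
  set A := M.submatrix (Fin.castAdd l) (Fin.castAdd l) with hA
  set B := M.submatrix (Fin.castAdd l) (Fin.natAdd k) with hB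
  set C := M.submatrix (Fin.natAdd k) (Fin.castAdd l) with hC
  set D := M.submatrix (Fin.natAdd k) (Fin.natAdd k) with hD
  set e : Fin k ⊕ Fin l ≃ Fin (k + l) := finSumFinEquiv with he
  have hMe : M.submatrix e e = fromBlocks A B C D := by
    ext i j
    cases i <;> cases j <;>
      simp [he, fromBlocks, hA, hB, hC, hD]
  haveI iA : Invertible A := A.invertibleOfIsUnitDet hMbb
  haveI iF : Invertible (fromBlocks A B C D) := by
    rw [← hMe]
    exact (M.submatrix e e).invertibleOfIsUnitDet
      (by rw [Matrix.det_submatrix_equiv_self]; exact hM)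
  haveI iS : Invertible (D - C * ⅟A * B) := invertibleOfFromBlocks₁₁Invertible A B C D
  have hS : schurSuffix M = D - C * ⅟A * B := by
    rw [invOf_eq_nonsing_inv]
    rfl
  haveI iS' : Invertible (schurSuffix M) := by rw [hS]; exact iS
  refine ⟨isUnit_det_of_invertible _, ?_⟩
  have hM2 : M = (fromBlocks A B C D).submatrix e.symm e.symm := by
    rw [← hMe]
    ext i j
    simp
  have hMinv : M⁻¹ = ((fromBlocks A B C D)⁻¹).submatrix e.symm e.symm := by
    rw [hM2, Matrix.inv_submatrix_equiv]
  have hFinv : (fromBlocks A B C D)⁻¹ =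
      fromBlocks (⅟A + ⅟A * B * ⅟(D - C * ⅟A * B) * C * ⅟A)
        (-(⅟A * B * ⅟(D - C * ⅟A * B))) (-(⅟(D - C * ⅟A * B) * C * ⅟A))
        (⅟(D - C * ⅟A * B)) := by
    rw [← invOf_eq_nonsing_inv, invOf_fromBlocks₁₁_eq]
  ext i j
  rw [Matrix.submatrix_apply, hMinv, Matrix.submatrix_apply, hFinv]
  have hi : e.symm (Fin.natAdd k i) = Sum.inr i := by
    rw [he, Equiv.symm_apply_eq, finSumFinEquiv_apply_right]
  have hj : e.symm (Fin.natAdd k j) = Sum.inr j := by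
    rw [he, Equiv.symm_apply_eq, finSumFinEquiv_apply_right]
  rw [hi, hj]
  show (⅟(D - C * ⅟A * B)) i j = (schurSuffix M)⁻¹ i j
  rw [invOf_eq_nonsing_inv, ← hS]

/-- **Displacement rank is not increased by leading minors and Schur complements.**
For a symmetric invertible `M` split into a prefix `C̄ = {1,…,k}` and suffix
`C = {k+1,…,k+l}` of its indices, with `M_{C̄C̄}` invertible, both the leading principal
submatrix `M_{C̄C̄}` and the Schur complement `SC(M, C)` have `s⁺`-displacement rank at most
that of `M`. -/
theorem displacement_rank_schur_closure {k l s : ℕ} (hs : 1 ≤ s)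
    (M : Matrix (Fin (k + l)) (Fin (k + l)) ℝ)
    (hsym : M.IsSymm) (hM : IsUnit M.det)
    (hMbb : IsUnit (M.submatrix (Fin.castAdd l) (Fin.castAdd l)).det) :
    (dispPlus s (M.submatrix (Fin.castAdd l) (Fin.castAdd l))).rank ≤
        (dispPlus s M).rank ∧
      (dispPlus s (schurSuffix M)).rank ≤ (dispPlus s M).rank := by
  constructor
  · rw [dispPlus_submatrix_castAdd]
    exact rank_submatrix_le' _ _ _
  · obtain ⟨hSdet, hSinv⟩ := schur_facts M hM hMbb
    have h1 : (dispPlus s (schurSuffix M)).rank = (dispMinus s (schurSuffix M)⁻¹).rank := by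
      simpa [dispPlus, dispMinus] using
        rank_sub_conj (schurSuffix M) (shiftMatrix l s) (shiftMatrix l s)ᵀ hSdet
    have h2 : (dispPlus s M).rank = (dispMinus s M⁻¹).rank := by
      simpa [dispPlus, dispMinus] using
        rank_sub_conj M (shiftMatrix (k + l) s) (shiftMatrix (k + l) s)ᵀ hM
    rw [h1, h2, ← hSinv, dispMinus_submatrix_natAdd]
    exact rank_submatrix_le' _ _ _
end

section
/- Let M be an n×n real invertible matrix and let C be a subset of the indices with complement C̄ such that both M and M_{C̄C̄} have all singular values in [σmin, σmax] with σmin > 0. Let M̃ be an n×n matrix with ‖M − M̃‖_F ≤ ε for some ε < 0.1·n^{−10}·σmin·(σmax/σmin)^{−2}. Then M̃ and M̃_{C̄C̄} are invertible and ‖SC(M, C) − SC(M̃, C)‖_F ≤ n^{30}·(σmax/σmin)⁴·ε. -/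
open Matrix

/-- Maximum singular value: the maximum of `‖Mx‖₂` over unit vectors `x`. -/
noncomputable def sigmaMax {ι κ' : Type*} [Fintype ι] [Fintype κ']
    (M : Matrix ι κ' ℝ) : ℝ :=
  ⨆ x : {x : κ' → ℝ // vnorm x = 1}, vnorm (M.mulVec x)

/-- Frobenius norm of a matrix. -/
noncomputable def frob {ι κ' : Type*} [Fintype ι] [Fintype κ']
    (M : Matrix ι κ' ℝ) : ℝ :=
  Real.sqrt (∑ i, ∑ j, M i j ^ 2)

/-- The Schur complement `SC(M, C) = M_{CC} − M_{CC̄}·M_{C̄C̄}⁻¹·M_{C̄C}` of an `n×n`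
matrix `M` onto a subset `C` of its indices (with complement `C̄`). -/
noncomputable def schurCompl {n : ℕ} (M : Matrix (Fin n) (Fin n) ℝ) (C : Finset (Fin n)) :
    Matrix {i // i ∈ C} {i // i ∈ C} ℝ :=
  M.submatrix Subtype.val Subtype.val -
    M.submatrix (Subtype.val : {i // i ∈ C} → Fin n)
        (Subtype.val : {i // i ∈ Cᶜ} → Fin n) *
      (M.submatrix (Subtype.val : {i // i ∈ Cᶜ} → Fin n)
        (Subtype.val : {i // i ∈ Cᶜ} → Fin n))⁻¹ *
      M.submatrix (Subtype.val : {i // i ∈ Cᶜ} → Fin n)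
        (Subtype.val : {i // i ∈ C} → Fin n)

/-!
Write `B = M_{C̄C̄}`, `E = M_{CC̄}`, `F = M_{C̄C}`. A lower bound `σ‖x‖ ≤ ‖Bx‖` survives a
perturbation of Frobenius size `ε` as `(σ - ε)‖x‖ ≤ ‖B̃x‖`; this makes `M̃` and `B̃` invertible
and gives `‖B⁻¹‖_F ≤ √n/σ`, `‖B̃⁻¹‖_F ≤ 2√n/σ` for `ε ≤ σ/2`. With
`B⁻¹ - B̃⁻¹ = B⁻¹ (B̃ - B) B̃⁻¹`, telescoping `E B⁻¹ F - Ẽ B̃⁻¹ F̃` factor by factor and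
`‖E‖_F, ‖F‖_F ≤ ‖M‖_F ≤ √n σmax` bound the change of the Schur complement by
`ε (1 + nκ)(1 + 4nκ)`, `κ = σmax/σmin`. This is below `n³⁰ κ⁴ ε` as soon as `n ≥ 2`, which holds
when `C ≠ ∅` (otherwise there is nothing to bound) because `C̄ ≠ ∅` is forced by `σmin > 0`.
-/

open scoped Matrix.Norms.Frobenius
open WithLp

theorem Fintype.sum_comp_le_sum_of_injective {β γ M : Type*} [Fintype β] [Fintype γ]
    [AddCommMonoid M] [PartialOrder M] [IsOrderedAddMonoid M] {e : β → γ} (he : e.Injective)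
    {u : γ → M} (hu : ∀ c, 0 ≤ u c) : ∑ b, u (e b) ≤ ∑ c, u c := by
  simpa using Finset.sum_le_sum_of_subset_of_nonneg
    (Finset.subset_univ (Finset.univ.map ⟨e, he⟩)) fun c _ _ => hu c

namespace Matrix

variable {𝕜 : Type*} [RCLike 𝕜] {l m n : Type*} [Fintype l] [Fintype m] [Fintype n]

theorem frobenius_norm_mulVec_le (A : Matrix m n 𝕜) (v : n → 𝕜) :
    ‖toLp 2 (A *ᵥ v)‖ ≤ ‖A‖ * ‖toLp 2 v‖ := by
  rw [← frobenius_norm_replicateCol (ι := Unit), ← frobenius_norm_replicateCol (ι := Unit),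
    replicateCol_mulVec]
  exact frobenius_norm_mul _ _

theorem frobenius_norm_submatrix_le {α : Type*} [SeminormedAddCommGroup α] {l' n' : Type*}
    [Fintype l'] [Fintype n'] (A : Matrix m n α) {f : l' → m} {g : n' → n}
    (hf : f.Injective) (hg : g.Injective) : ‖A.submatrix f g‖ ≤ ‖A‖ := by
  simp only [frobenius_norm_def, submatrix_apply]
  gcongr
  calc ∑ i, ∑ j, ‖A (f i) (g j)‖ ^ (2 : ℝ) ≤ ∑ i, ∑ j, ‖A (f i) j‖ ^ (2 : ℝ) :=
        Finset.sum_le_sum fun i _ =>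
          Fintype.sum_comp_le_sum_of_injective hg (u := fun j => ‖A (f i) j‖ ^ (2 : ℝ))
            fun _ => by positivity
    _ ≤ ∑ i, ∑ j, ‖A i j‖ ^ (2 : ℝ) :=
        Fintype.sum_comp_le_sum_of_injective hf (u := fun i => ∑ j, ‖A i j‖ ^ (2 : ℝ))
          fun _ => by positivity

theorem frobenius_norm_submatrix_sub_submatrix_le {α : Type*} [SeminormedAddCommGroup α]
    {l' n' : Type*} [Fintype l'] [Fintype n'] (A B : Matrix m n α) {f : l' → m} {g : n' → n}
    (hf : f.Injective) (hg : g.Injective) :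
    ‖A.submatrix f g - B.submatrix f g‖ ≤ ‖A - B‖ :=
  (A - B).frobenius_norm_submatrix_le hf hg

theorem frobenius_norm_mul_mul_le {o : Type*} [Fintype o] (X : Matrix l m 𝕜) (Y : Matrix m n 𝕜)
    (Z : Matrix n o 𝕜) : ‖X * Y * Z‖ ≤ ‖X‖ * ‖Y‖ * ‖Z‖ :=
  (frobenius_norm_mul _ _).trans (by gcongr; exact frobenius_norm_mul _ _)

theorem frobenius_norm_mul_mul_sub_mul_mul_le {o : Type*} [Fintype o] (X X' : Matrix l m 𝕜)
    (Y Y' : Matrix m n 𝕜) (Z Z' : Matrix n o 𝕜) :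
    ‖X * Y * Z - X' * Y' * Z'‖ ≤
      ‖X - X'‖ * ‖Y‖ * ‖Z‖ + ‖X'‖ * ‖Y - Y'‖ * ‖Z‖ + ‖X'‖ * ‖Y'‖ * ‖Z - Z'‖ := by
  have h : X * Y * Z - X' * Y' * Z' =
      (X - X') * Y * Z + X' * (Y - Y') * Z + X' * Y' * (Z - Z') := by
    simp only [Matrix.sub_mul, Matrix.mul_sub]; abel
  rw [h]
  exact norm_add₃_le.trans (add_le_add_three (frobenius_norm_mul_mul_le _ _ _)
    (frobenius_norm_mul_mul_le _ _ _) (frobenius_norm_mul_mul_le _ _ _))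

theorem frobenius_norm_le_of_norm_col_le (A : Matrix m n 𝕜) {c : ℝ} (hc : 0 ≤ c)
    (h : ∀ j, ‖toLp 2 (A.col j)‖ ≤ c) : ‖A‖ ≤ √(Fintype.card n) * c := by
  rw [← frobenius_norm_transpose]
  change ‖toLp 2 fun j => toLp 2 (A.col j)‖ ≤ _
  rw [PiLp.norm_eq_of_L2, ← Real.sqrt_sq hc, ← Real.sqrt_mul (by positivity)]
  gcongr
  have := Finset.sum_le_card_nsmul Finset.univ _ _ fun j _ =>
    pow_le_pow_left₀ (norm_nonneg _) (h j) 2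
  rwa [Finset.card_univ, nsmul_eq_mul] at this

theorem mul_norm_le_norm_mulVec_of_frobenius_norm_sub_le {A B : Matrix m n 𝕜} {σ ε : ℝ}
    (hA : ∀ x, σ * ‖toLp 2 x‖ ≤ ‖toLp 2 (A *ᵥ x)‖) (hAB : ‖A - B‖ ≤ ε) (x : n → 𝕜) :
    (σ - ε) * ‖toLp 2 x‖ ≤ ‖toLp 2 (B *ᵥ x)‖ := by
  have h : ‖toLp 2 (A *ᵥ x)‖ ≤ ‖toLp 2 (B *ᵥ x)‖ + ε * ‖toLp 2 x‖ :=
    calc ‖toLp 2 (A *ᵥ x)‖ = ‖toLp 2 (B *ᵥ x) + toLp 2 ((A - B) *ᵥ x)‖ := by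
          rw [← toLp_add, sub_mulVec, add_sub_cancel]
      _ ≤ ‖toLp 2 (B *ᵥ x)‖ + ‖A - B‖ * ‖toLp 2 x‖ :=
          (norm_add_le _ _).trans (by gcongr; exact frobenius_norm_mulVec_le _ _)
      _ ≤ ‖toLp 2 (B *ᵥ x)‖ + ε * ‖toLp 2 x‖ := by gcongr
  linarith [hA x]

variable [DecidableEq n]

theorem isUnit_det_of_mul_norm_le_norm_mulVec {A : Matrix n n 𝕜} {σ : ℝ} (hσ : 0 < σ)
    (hA : ∀ x, σ * ‖toLp 2 x‖ ≤ ‖toLp 2 (A *ᵥ x)‖) : IsUnit A.det := by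
  rw [← isUnit_iff_isUnit_det, ← mulVec_injective_iff_isUnit]
  intro x y hxy
  have h := hA (x - y)
  rw [mulVec_sub, hxy, sub_self, toLp_zero, norm_zero] at h
  have : ‖toLp 2 (x - y)‖ = 0 := le_antisymm (nonpos_of_mul_nonpos_right h hσ) (norm_nonneg _)
  rwa [norm_eq_zero, toLp_eq_zero, sub_eq_zero] at this

theorem isUnit_det_of_frobenius_norm_sub_le {A B : Matrix n n 𝕜} {σ ε : ℝ} (hεσ : ε < σ)
    (hA : ∀ x, σ * ‖toLp 2 x‖ ≤ ‖toLp 2 (A *ᵥ x)‖) (hAB : ‖A - B‖ ≤ ε) : IsUnit B.det :=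
  isUnit_det_of_mul_norm_le_norm_mulVec (sub_pos.mpr hεσ)
    (mul_norm_le_norm_mulVec_of_frobenius_norm_sub_le hA hAB)

theorem frobenius_norm_nonsing_inv_le {A : Matrix n n 𝕜} {σ : ℝ} (hσ : 0 < σ)
    (hA : ∀ x, σ * ‖toLp 2 x‖ ≤ ‖toLp 2 (A *ᵥ x)‖) :
    ‖A⁻¹‖ ≤ √(Fintype.card n) * σ⁻¹ := by
  refine frobenius_norm_le_of_norm_col_le _ (by positivity) fun j => ?_
  have h := hA (A⁻¹ *ᵥ Pi.single j 1)
  rw [mulVec_mulVec, mul_nonsing_inv _ (isUnit_det_of_mul_norm_le_norm_mulVec hσ hA),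
    one_mulVec, mulVec_single_one] at h
  have hsingle : ‖toLp 2 (Pi.single (M := fun _ => 𝕜) j 1)‖ = 1 := by
    rw [PiLp.toLp_single, PiLp.norm_single, norm_one]
  rw [← mul_le_mul_iff_of_pos_left hσ, mul_inv_cancel₀ hσ.ne']
  exact h.trans hsingle.le

theorem frobenius_norm_schur_sub_schur_le {A A' : Matrix m m 𝕜} {E E' : Matrix m n 𝕜}
    {F F' : Matrix n m 𝕜} {B B' : Matrix n n 𝕜} {σ ρ ε : ℝ} (hσ : 0 < σ)
    (hB : ∀ x, σ * ‖toLp 2 x‖ ≤ ‖toLp 2 (B *ᵥ x)‖) (hεσ : ε ≤ σ / 2) (hερ : ε ≤ ρ)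
    (hE : ‖E‖ ≤ ρ) (hF : ‖F‖ ≤ ρ) (hAA : ‖A - A'‖ ≤ ε) (hEE : ‖E - E'‖ ≤ ε)
    (hFF : ‖F - F'‖ ≤ ε) (hBB : ‖B - B'‖ ≤ ε) :
    ‖(A - E * B⁻¹ * F) - (A' - E' * B'⁻¹ * F')‖ ≤
      ε * (1 + √(Fintype.card n) * ρ / σ) * (1 + 4 * (√(Fintype.card n) * ρ / σ)) := by
  set s := √(Fintype.card n)
  have hε : 0 ≤ ε := (norm_nonneg _).trans hAA
  have hρ : 0 ≤ ρ := (norm_nonneg _).trans hE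
  have hB' : ∀ x, σ / 2 * ‖toLp 2 x‖ ≤ ‖toLp 2 (B' *ᵥ x)‖ := fun x =>
    (mul_le_mul_of_nonneg_right (by linarith) (norm_nonneg _)).trans
      (mul_norm_le_norm_mulVec_of_frobenius_norm_sub_le hB hBB x)
  have hBinv : ‖B⁻¹‖ ≤ s * σ⁻¹ := frobenius_norm_nonsing_inv_le hσ hB
  have hB'inv : ‖B'⁻¹‖ ≤ s * (2 * σ⁻¹) := by
    simpa [div_eq_mul_inv, mul_comm] using frobenius_norm_nonsing_inv_le (by positivity) hB'
  have hdinv : ‖B⁻¹ - B'⁻¹‖ ≤ s * σ⁻¹ * ε * (s * (2 * σ⁻¹)) := by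
    have hunit : IsUnit B ↔ IsUnit B' := by
      simp only [isUnit_iff_isUnit_det, isUnit_det_of_mul_norm_le_norm_mulVec hσ hB,
        isUnit_det_of_mul_norm_le_norm_mulVec (by positivity) hB']
    rw [inv_sub_inv hunit]
    refine (frobenius_norm_mul_mul_le _ _ _).trans ?_
    gcongr
    rwa [norm_sub_rev]
  have hE' : ‖E'‖ ≤ 2 * ρ := by
    have := norm_sub_norm_le E' E
    rw [norm_sub_rev] at this
    linarith
  calc ‖(A - E * B⁻¹ * F) - (A' - E' * B'⁻¹ * F')‖
      ≤ ‖A - A'‖ + ‖E * B⁻¹ * F - E' * B'⁻¹ * F'‖ := by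
        rw [sub_sub_sub_comm]; exact norm_sub_le _ _
    _ ≤ ε + (ε * (s * σ⁻¹) * ρ + 2 * ρ * (s * σ⁻¹ * ε * (s * (2 * σ⁻¹))) * ρ
          + 2 * ρ * (s * (2 * σ⁻¹)) * ε) := by
        refine add_le_add hAA ((frobenius_norm_mul_mul_sub_mul_mul_le _ _ _ _ _ _).trans ?_)
        gcongr
    _ = ε * (1 + s * ρ / σ) * (1 + 4 * (s * ρ / σ)) := by ring

end Matrix

section SingularValues

variable {ι κ : Type*} [Fintype ι] [Fintype κ]

theorem vnorm_eq_norm (v : ι → ℝ) : vnorm v = ‖toLp 2 v‖ := by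
  simp [vnorm, EuclideanSpace.norm_eq]

theorem frob_eq_norm (A : Matrix ι κ ℝ) : frob A = ‖A‖ := by
  simp [frob, frobenius_norm_def, Real.sqrt_eq_rpow]

theorem exists_norm_mulVec_eq_mul (A : Matrix ι κ ℝ) {x : κ → ℝ} (hx : x ≠ 0) :
    ∃ u : {u : κ → ℝ // vnorm u = 1},
      ‖toLp 2 (A *ᵥ x)‖ = ‖toLp 2 x‖ * vnorm (A *ᵥ u) := by
  have hx' : ‖toLp 2 x‖ ≠ 0 := by simpa using hx
  refine ⟨⟨‖toLp 2 x‖⁻¹ • x, ?_⟩, ?_⟩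
  · rw [vnorm_eq_norm, toLp_smul, norm_smul, norm_inv, norm_norm, inv_mul_cancel₀ hx']
  · rw [vnorm_eq_norm, mulVec_smul, toLp_smul, norm_smul, norm_inv, norm_norm,
      mul_inv_cancel_left₀ hx']

theorem sigmaMin_le_vnorm_mulVec (A : Matrix ι κ ℝ) (u : {u : κ → ℝ // vnorm u = 1}) :
    sigmaMin A ≤ vnorm (A *ᵥ u) :=
  ciInf_le ⟨0, by rintro _ ⟨v, rfl⟩; exact Real.sqrt_nonneg _⟩ u

theorem vnorm_mulVec_le_sigmaMax (A : Matrix ι κ ℝ) (u : {u : κ → ℝ // vnorm u = 1}) :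
    vnorm (A *ᵥ u) ≤ sigmaMax A := by
  refine le_ciSup (f := fun v : {u : κ → ℝ // vnorm u = 1} => vnorm (A *ᵥ v)) ⟨‖A‖, ?_⟩ u
  rintro _ ⟨v, rfl⟩
  have := Matrix.frobenius_norm_mulVec_le A v
  rwa [← vnorm_eq_norm, ← vnorm_eq_norm, v.2, mul_one] at this

theorem mul_norm_le_norm_mulVec_of_le_sigmaMin {A : Matrix ι κ ℝ} {σ : ℝ}
    (h : σ ≤ sigmaMin A) (x : κ → ℝ) : σ * ‖toLp 2 x‖ ≤ ‖toLp 2 (A *ᵥ x)‖ := by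
  rcases eq_or_ne x 0 with rfl | hx
  · simp
  obtain ⟨u, hu⟩ := exists_norm_mulVec_eq_mul A hx
  rw [hu, mul_comm]
  gcongr
  exact h.trans (sigmaMin_le_vnorm_mulVec A u)

theorem norm_mulVec_le_of_sigmaMax_le {A : Matrix ι κ ℝ} {σ : ℝ}
    (h : sigmaMax A ≤ σ) (x : κ → ℝ) : ‖toLp 2 (A *ᵥ x)‖ ≤ σ * ‖toLp 2 x‖ := by
  rcases eq_or_ne x 0 with rfl | hx
  · simp
  obtain ⟨u, hu⟩ := exists_norm_mulVec_eq_mul A hx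
  rw [hu, mul_comm]
  gcongr
  exact (vnorm_mulVec_le_sigmaMax A u).trans h

theorem nonempty_of_pos_of_le_sigmaMin {A : Matrix ι κ ℝ} {σ : ℝ} (hσ : 0 < σ)
    (h : σ ≤ sigmaMin A) : Nonempty κ := by
  by_contra hκ
  rw [not_nonempty_iff] at hκ
  have : IsEmpty {u : κ → ℝ // vnorm u = 1} :=
    ⟨fun u => by simpa [vnorm] using u.2⟩
  rw [sigmaMin, Real.iInf_of_isEmpty] at h
  exact hσ.not_ge h

theorem sigmaMin_le_sigmaMax [Nonempty κ] (A : Matrix ι κ ℝ) : sigmaMin A ≤ sigmaMax A := by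
  classical
  obtain ⟨j⟩ := ‹Nonempty κ›
  have hj : vnorm (Pi.single j 1 : κ → ℝ) = 1 := by
    rw [vnorm_eq_norm, PiLp.toLp_single, PiLp.norm_single, norm_one]
  exact (sigmaMin_le_vnorm_mulVec A ⟨_, hj⟩).trans (vnorm_mulVec_le_sigmaMax A ⟨_, hj⟩)

theorem frobenius_norm_le_of_sigmaMax_le [DecidableEq κ] {A : Matrix ι κ ℝ} {σ : ℝ}
    (hσ : 0 ≤ σ) (h : sigmaMax A ≤ σ) : ‖A‖ ≤ √(Fintype.card κ) * σ := by
  refine A.frobenius_norm_le_of_norm_col_le hσ fun j => ?_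
  have := norm_mulVec_le_of_sigmaMax_le h (Pi.single j 1)
  rwa [mulVec_single_one, PiLp.toLp_single, PiLp.norm_single, norm_one, mul_one] at this

end SingularValues

theorem frobenius_norm_schurCompl_sub_schurCompl_le {n : ℕ} {M Mt : Matrix (Fin n) (Fin n) ℝ}
    (C : Finset (Fin n)) {σ ρ ε : ℝ} (hσ : 0 < σ)
    (hB : ∀ x : {i // i ∈ Cᶜ} → ℝ, σ * ‖toLp 2 x‖ ≤
      ‖toLp 2 (M.submatrix (Subtype.val : {i // i ∈ Cᶜ} → Fin n) Subtype.val *ᵥ x)‖)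
    (hM : ‖M‖ ≤ ρ) (hε : ‖M - Mt‖ ≤ ε) (hεσ : ε ≤ σ / 2) (hερ : ε ≤ ρ) :
    ‖schurCompl M C - schurCompl Mt C‖ ≤ ε * (1 + √n * ρ / σ) * (1 + 4 * (√n * ρ / σ)) := by
  have hsub {k l : Type} [Fintype k] [Fintype l] {f : k → Fin n} {g : l → Fin n}
      (hf : f.Injective) (hg : g.Injective) : ‖M.submatrix f g - Mt.submatrix f g‖ ≤ ε :=
    (M.frobenius_norm_submatrix_sub_submatrix_le Mt hf hg).trans hε
  have hblock {k l : Type} [Fintype k] [Fintype l] {f : k → Fin n} {g : l → Fin n}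
      (hf : f.Injective) (hg : g.Injective) : ‖M.submatrix f g‖ ≤ ρ :=
    (M.frobenius_norm_submatrix_le hf hg).trans hM
  have hcard : √(Fintype.card {i // i ∈ Cᶜ}) ≤ √n := Real.sqrt_le_sqrt (by
    exact_mod_cast (Fintype.card_subtype_le _).trans_eq (Fintype.card_fin n))
  have hρ : 0 ≤ ρ := (norm_nonneg _).trans hM
  have hε0 : 0 ≤ ε := (norm_nonneg _).trans hε
  have hv := Subtype.val_injective (p := (· ∈ C))
  have hv' := Subtype.val_injective (p := (· ∈ Cᶜ))
  refine (frobenius_norm_schur_sub_schur_le hσ hB hεσ hερ (hblock hv hv') (hblock hv' hv)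
    (hsub hv hv) (hsub hv hv') (hsub hv' hv) (hsub hv' hv')).trans ?_
  gcongr

theorem two_le_of_nonempty_of_nonempty_compl {n : ℕ} {C : Finset (Fin n)} (hC : C.Nonempty)
    (hC' : Cᶜ.Nonempty) : 2 ≤ n := by
  have := C.card_add_card_compl
  rw [Fintype.card_fin] at this
  have := hC.card_pos
  have := hC'.card_pos
  omega

theorem le_half_of_lt_threshold {n : ℕ} (hn : 1 ≤ n) {σmin σmax ε : ℝ} (hσ : 0 < σmin)
    (hσσ : σmin ≤ σmax) (h : ε < 0.1 * (n : ℝ) ^ (-10 : ℝ) * σmin * (σmax / σmin)⁻¹ ^ 2) :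
    ε ≤ σmin / 2 := by
  have hn' : (n : ℝ) ^ (-10 : ℝ) ≤ 1 :=
    Real.rpow_le_one_of_one_le_of_nonpos (by exact_mod_cast hn) (by norm_num)
  have hκ : (σmax / σmin)⁻¹ ≤ 1 := inv_le_one_of_one_le₀ ((one_le_div hσ).mpr hσσ)
  have : (n : ℝ) ^ (-10 : ℝ) * (σmax / σmin)⁻¹ ^ 2 ≤ 1 :=
    mul_le_one₀ hn' (by positivity)
      (pow_le_one₀ (inv_nonneg.mpr (div_nonneg (hσ.le.trans hσσ) hσ.le)) hκ)
  nlinarith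

theorem one_add_mul_one_add_four_mul_le {n : ℕ} (hn : 2 ≤ n) {κ : ℝ} (hκ : 1 ≤ κ) :
    (1 + n * κ) * (1 + 4 * (n * κ)) ≤ (n : ℝ) ^ 30 * κ ^ 4 := by
  have hn' : (2 : ℝ) ≤ n := by exact_mod_cast hn
  have hx : 1 ≤ (n : ℝ) * κ := by nlinarith
  have h28 : (10 : ℝ) ≤ (n : ℝ) ^ 28 * κ ^ 2 :=
    calc (10 : ℝ) ≤ 2 ^ 28 * 1 := by norm_num
      _ ≤ (n : ℝ) ^ 28 * κ ^ 2 := by gcongr; exact one_le_pow₀ hκ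
  calc (1 + n * κ) * (1 + 4 * (n * κ)) ≤ 10 * ((n : ℝ) * κ) ^ 2 := by nlinarith
    _ ≤ (n : ℝ) ^ 28 * κ ^ 2 * ((n : ℝ) * κ) ^ 2 := by gcongr
    _ = (n : ℝ) ^ 30 * κ ^ 4 := by ring

theorem schur_complement_perturbation_general {n : ℕ}
    (M Mt : Matrix (Fin n) (Fin n) ℝ) (C : Finset (Fin n))
    (σmin σmax ε : ℝ) (hσ : 0 < σmin)
    (hMmin : σmin ≤ sigmaMin M) (hMmax : sigmaMax M ≤ σmax)
    (hBmin : σmin ≤ sigmaMin (M.submatrix (Subtype.val : {i // i ∈ Cᶜ} → Fin n)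
      (Subtype.val : {i // i ∈ Cᶜ} → Fin n)))
    (hε : frob (M - Mt) ≤ ε)
    (hεsmall : ε < 0.1 * (n : ℝ) ^ (-10 : ℝ) * σmin * (σmax / σmin)⁻¹ ^ 2) :
    IsUnit Mt.det ∧
      IsUnit (Mt.submatrix (Subtype.val : {i // i ∈ Cᶜ} → Fin n)
        (Subtype.val : {i // i ∈ Cᶜ} → Fin n)).det ∧
      frob (schurCompl M C - schurCompl Mt C) ≤
        (n : ℝ) ^ 30 * (σmax / σmin) ^ 4 * ε := by
  rw [frob_eq_norm] at hε ⊢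
  have hMx := mul_norm_le_norm_mulVec_of_le_sigmaMin hMmin
  have hBx := mul_norm_le_norm_mulVec_of_le_sigmaMin hBmin
  have hn : Nonempty (Fin n) := nonempty_of_pos_of_le_sigmaMin hσ hMmin
  obtain ⟨⟨i, hi⟩⟩ := nonempty_of_pos_of_le_sigmaMin hσ hBmin
  have hσσ : σmin ≤ σmax := hMmin.trans ((sigmaMin_le_sigmaMax M).trans hMmax)
  have hεσ : ε ≤ σmin / 2 :=
    le_half_of_lt_threshold (Fin.pos_iff_nonempty.mpr hn) hσ hσσ hεsmall
  have hε0 : 0 ≤ ε := (norm_nonneg _).trans hε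
  refine ⟨isUnit_det_of_frobenius_norm_sub_le (by linarith) hMx hε,
    isUnit_det_of_frobenius_norm_sub_le (by linarith) hBx
      ((M.frobenius_norm_submatrix_sub_submatrix_le Mt Subtype.val_injective
        Subtype.val_injective).trans hε), ?_⟩
  rcases isEmpty_or_nonempty {i // i ∈ C} with hC | ⟨⟨j, hj⟩⟩
  · rw [Subsingleton.elim (schurCompl M C - schurCompl Mt C) 0, norm_zero]
    positivity
  have hn2 : 2 ≤ n := two_le_of_nonempty_of_nonempty_compl ⟨j, hj⟩ ⟨i, hi⟩
  have hsqrt : 1 ≤ √(n : ℝ) := Real.one_le_sqrt.mpr (by exact_mod_cast one_le_two.trans hn2)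
  have hM : ‖M‖ ≤ √n * σmax := by
    simpa using frobenius_norm_le_of_sigmaMax_le (hσ.le.trans hσσ) hMmax
  calc ‖schurCompl M C - schurCompl Mt C‖
      ≤ ε * (1 + √n * (√n * σmax) / σmin) * (1 + 4 * (√n * (√n * σmax) / σmin)) :=
        frobenius_norm_schurCompl_sub_schurCompl_le C hσ hBx hM hε hεσ (by nlinarith)
    _ = (1 + n * (σmax / σmin)) * (1 + 4 * (n * (σmax / σmin))) * ε := by
        rw [← mul_assoc, Real.mul_self_sqrt n.cast_nonneg]; ring
    _ ≤ (n : ℝ) ^ 30 * (σmax / σmin) ^ 4 * ε :=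
        mul_le_mul_of_nonneg_right
          (one_add_mul_one_add_four_mul_le hn2 ((one_le_div hσ).mpr hσσ)) hε0

/-- **Stability of Schur complements under perturbation.**
If both `M` and `M_{C̄C̄}` have all singular values in `[σmin, σmax]` (`σmin > 0`), `M` is
invertible, and `‖M − M̃‖_F ≤ ε < 0.1·n⁻¹⁰·σmin·(σmax/σmin)⁻²`, then `M̃` and `M̃_{C̄C̄}` are
invertible, and `‖SC(M, C) − SC(M̃, C)‖_F ≤ n³⁰·(σmax/σmin)⁴·ε`. -/
theorem schur_complement_perturbation {n : ℕ}
    (M Mt : Matrix (Fin n) (Fin n) ℝ) (C : Finset (Fin n))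
    (σmin σmax ε : ℝ) (hσ : 0 < σmin)
    (hM : IsUnit M.det)
    (hMmin : σmin ≤ sigmaMin M) (hMmax : sigmaMax M ≤ σmax)
    (hBmin : σmin ≤ sigmaMin (M.submatrix (Subtype.val : {i // i ∈ Cᶜ} → Fin n)
      (Subtype.val : {i // i ∈ Cᶜ} → Fin n)))
    (hBmax : sigmaMax (M.submatrix (Subtype.val : {i // i ∈ Cᶜ} → Fin n)
      (Subtype.val : {i // i ∈ Cᶜ} → Fin n)) ≤ σmax)
    (hε : frob (M - Mt) ≤ ε)
    (hεsmall : ε < 0.1 * (n : ℝ) ^ (-10 : ℝ) * σmin * (σmax / σmin)⁻¹ ^ 2) :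
    IsUnit Mt.det ∧
      IsUnit (Mt.submatrix (Subtype.val : {i // i ∈ Cᶜ} → Fin n)
        (Subtype.val : {i // i ∈ Cᶜ} → Fin n)).det ∧
      frob (schurCompl M C - schurCompl Mt C) ≤
        (n : ℝ) ^ 30 * (σmax / σmin) ^ 4 * ε :=
  schur_complement_perturbation_general M Mt C σmin σmax ε hσ hMmin hMmax hBmin hε hεsmall
end

section
/- Fix a block size s ≥ 1 and a block count m ≥ 1, and let Δ(s) be the (ms)×(ms) shift-down-by-s matrix. For an (ms)×s matrix X, let T_L(X) be the (ms)×(ms) block lower-triangular Toeplitz matrix whose (i,j) s×s block is X_{\{i−j+1\}} (the (i−j+1)-st s×s block of X) when j ≤ i, and 0 when j > i. Then for any number t and any (ms)×s real matrices X⁽¹⁾,…,X⁽ᵗ⁾ and Y⁽¹⁾,…,Y⁽ᵗ⁾, the matrix M = Σ_{k=1}^{t} T_L(X⁽ᵏ⁾)·T_L(Y⁽ᵏ⁾)ᵀ is the unique (ms)×(ms) matrix satisfying M − Δ(s)·M·Δ(s)ᵀ = Σ_{k=1}^{t} X⁽ᵏ⁾·(Y⁽ᵏ⁾)ᵀ;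 in particular, for every (ms)×(ms) matrix N there is exactly one matrix M with M − Δ(s)·M·Δ(s)ᵀ = N. -/
/-!
Lower block-triangular Toeplitz matrices commute with the block shift `Δ`, and
`Δ Δᵀ = 1 - ι ιᵀ`, where `ι = [I_s; 0]` (`leadingUnitColumns`). Hence
`Δ (T_L(X) T_L(Y)ᵀ) Δᵀ = T_L(X) Δ Δᵀ T_L(Y)ᵀ = T_L(X) T_L(Y)ᵀ - (T_L(X) ι) (T_L(Y) ι)ᵀ`,
and `T_L(X) ι = X`. Uniqueness holds because `Δ` is nilpotent, so `M ↦ Δ M Δᵀ` is a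
nilpotent linear map and `M ↦ M - Δ M Δᵀ` is invertible.
-/

open Matrix

/-- The block lower-triangular Toeplitz matrix `T_L(X)` built from an `(ms)×s` matrix `X`
viewed as a vertical stack of `m` blocks of size `s×s`: the `s×s` block of `T_L(X)` in block
position `(i, j)` is the `(i−j+1)`-st block of `X` when `j ≤ i`, and `0` otherwise. -/
def TL {m s : ℕ} (hs : 0 < s) (X : Matrix (Fin (m * s)) (Fin s) ℝ) :
    Matrix (Fin (m * s)) (Fin (m * s)) ℝ :=
  Matrix.of fun p q =>
    if (q : ℕ) / s ≤ (p : ℕ) / s then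
      X ⟨((p : ℕ) / s - (q : ℕ) / s) * s + (p : ℕ) % s, by
          have hp : (p : ℕ) / s < m :=
            Nat.div_lt_of_lt_mul (Nat.mul_comm m s ▸ p.isLt)
          have h1 : (p : ℕ) / s - (q : ℕ) / s < m :=
            lt_of_le_of_lt (Nat.sub_le _ _) hp
          calc ((p : ℕ) / s - (q : ℕ) / s) * s + (p : ℕ) % s
              < ((p : ℕ) / s - (q : ℕ) / s) * s + s :=
                Nat.add_lt_add_left (Nat.mod_lt _ hs) _
            _ = (((p : ℕ) / s - (q : ℕ) / s) + 1) * s := by ring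
            _ ≤ m * s := Nat.mul_le_mul (Nat.succ_le_of_lt h1) le_rfl⟩
        ⟨(q : ℕ) % s, Nat.mod_lt _ hs⟩
    else 0

theorem Matrix.existsUnique_sub_mul_mul_transpose_eq {n R : Type*} [Fintype n] [DecidableEq n]
    [CommRing R] {A : Matrix n n R} (hA : IsNilpotent A) (N : Matrix n n R) :
    ∃! M : Matrix n n R, M - A * M * Aᵀ = N := by
  set L := LinearMap.mulLeft R A * LinearMap.mulRight R Aᵀ
  have hL : IsNilpotent L := (LinearMap.commute_mulLeft_right A Aᵀ).isNilpotent_mul_right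
    ((LinearMap.isNilpotent_mulLeft_iff R A).mpr hA)
  simpa [L, Matrix.mul_assoc] using
    ((Module.End.isUnit_iff _).mp hL.isUnit_one_sub).existsUnique N

theorem Matrix.mul_transpose_sub_mul_mul_transpose {n k R : Type*} [Fintype n] [Fintype k]
    [DecidableEq n] [CommRing R] {D A B : Matrix n n R} {P : Matrix n k R}
    (hA : Commute D A) (hB : Commute D B) (hD : D * Dᵀ = 1 - P * Pᵀ) :
    A * Bᵀ - D * (A * Bᵀ) * Dᵀ = A * P * (B * P)ᵀ := by
  have hconj : D * (A * Bᵀ) * Dᵀ = A * (D * Dᵀ) * Bᵀ := calc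
    D * (A * Bᵀ) * Dᵀ = (D * A) * (D * B)ᵀ := by simp only [transpose_mul, Matrix.mul_assoc]
    _ = (A * D) * (B * D)ᵀ := by rw [hA.eq, hB.eq]
    _ = A * (D * Dᵀ) * Bᵀ := by simp only [transpose_mul, Matrix.mul_assoc]
  rw [hconj, hD, transpose_mul]
  simp only [Matrix.mul_sub, Matrix.sub_mul, Matrix.mul_one, Matrix.mul_assoc]
  abel

theorem shiftMatrix_mul_apply {n s : ℕ} {α : Type*} (M : Matrix (Fin n) α ℝ) (i : Fin n) (j : α) :
    (shiftMatrix n s * M) i j = if h : s ≤ i then M ⟨i - s, by omega⟩ j else 0 := by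
  rw [mul_apply]
  split_ifs with h
  · rw [Fintype.sum_eq_single ⟨i - s, by omega⟩ fun k hk => ?_]
    · simp [shiftMatrix, h]
    · simp only [shiftMatrix, of_apply, ite_mul, one_mul, zero_mul]
      exact if_neg fun hik => hk (Fin.ext (by dsimp only; omega))
  · refine Finset.sum_eq_zero fun k _ => ?_
    simp only [shiftMatrix, of_apply, ite_mul, one_mul, zero_mul]
    exact if_neg (by omega)

theorem mul_shiftMatrix_apply {n s : ℕ} {α : Type*} (M : Matrix α (Fin n) ℝ) (i : α) (j : Fin n) :
    (M * shiftMatrix n s) i j = if h : j + s < n then M i ⟨j + s, h⟩ else 0 := by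
  rw [mul_apply]
  split_ifs with h
  · rw [Fintype.sum_eq_single ⟨j + s, h⟩ fun k hk => ?_]
    · simp [shiftMatrix]
    · simp only [shiftMatrix, of_apply, mul_ite, mul_one, mul_zero]
      exact if_neg fun hkj => hk (Fin.ext hkj)
  · refine Finset.sum_eq_zero fun k _ => ?_
    simp only [shiftMatrix, of_apply, mul_ite, mul_one, mul_zero]
    exact if_neg (by omega)

theorem shiftMatrix_mul_shiftMatrix (n a b : ℕ) :
    shiftMatrix n a * shiftMatrix n b = shiftMatrix n (a + b) := by
  ext i j
  rw [shiftMatrix_mul_apply]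
  split_ifs with h
  · simp only [shiftMatrix, of_apply]
    congr 1; apply propext; omega
  · simp only [shiftMatrix, of_apply]
    exact (if_neg (by omega)).symm

theorem shiftMatrix_pow (n s k : ℕ) : shiftMatrix n s ^ k = shiftMatrix n (k * s) := by
  induction k with
  | zero => ext i j; simp [shiftMatrix, one_apply, Fin.ext_iff]
  | succ k ih => rw [pow_succ, ih, shiftMatrix_mul_shiftMatrix, Nat.succ_mul]

theorem shiftMatrix_eq_zero {n s : ℕ} (h : n ≤ s) : shiftMatrix n s = 0 := by
  ext i j
  simp only [shiftMatrix, of_apply, Matrix.zero_apply]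
  exact if_neg (by omega)

theorem isNilpotent_shiftMatrix (n : ℕ) {s : ℕ} (hs : 0 < s) : IsNilpotent (shiftMatrix n s) :=
  ⟨n, by rw [shiftMatrix_pow, shiftMatrix_eq_zero (Nat.le_mul_of_pos_right n hs)]⟩

def leadingUnitColumns (n s : ℕ) : Matrix (Fin n) (Fin s) ℝ :=
  Matrix.of fun i j => if (i : ℕ) = j then 1 else 0

theorem leadingUnitColumns_mul_apply {n s : ℕ} {α : Type*} (M : Matrix (Fin s) α ℝ)
    (i : Fin n) (j : α) :
    (leadingUnitColumns n s * M) i j = if h : (i : ℕ) < s then M ⟨i, h⟩ j else 0 := by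
  rw [mul_apply]
  split_ifs with h
  · rw [Fintype.sum_eq_single ⟨i, h⟩ fun k hk => ?_]
    · simp [leadingUnitColumns]
    · simp only [leadingUnitColumns, of_apply, ite_mul, one_mul, zero_mul]
      exact if_neg fun hik => hk (Fin.ext hik.symm)
  · refine Finset.sum_eq_zero fun k _ => ?_
    simp only [leadingUnitColumns, of_apply, ite_mul, one_mul, zero_mul]
    exact if_neg (by omega)

theorem shiftMatrix_mul_transpose (n s : ℕ) :
    shiftMatrix n s * (shiftMatrix n s)ᵀ =
      1 - leadingUnitColumns n s * (leadingUnitColumns n s)ᵀ := by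
  ext i j
  rw [shiftMatrix_mul_apply, Matrix.sub_apply, one_apply, leadingUnitColumns_mul_apply]
  by_cases h : s ≤ i
  · simp [h, shiftMatrix, Fin.ext_iff, eq_comm, show ¬(i : ℕ) < s by omega]
  · simp [h, leadingUnitColumns, Fin.ext_iff, eq_comm, show (i : ℕ) < s by omega]

theorem TL_mul_leadingUnitColumns {m s : ℕ} (hs : 0 < s) (X : Matrix (Fin (m * s)) (Fin s) ℝ) :
    TL hs X * leadingUnitColumns (m * s) s = X := by
  ext i j
  have hsm : s ≤ m * s := Nat.le_mul_of_pos_left s (Nat.pos_of_mul_pos_right i.pos)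
  rw [mul_apply, Fintype.sum_eq_single ⟨j, by omega⟩ fun k hk => ?_]
  · simp [TL, leadingUnitColumns, Nat.div_eq_of_lt j.isLt, Nat.mod_eq_of_lt j.isLt,
      Nat.div_add_mod']
  · simp only [leadingUnitColumns, of_apply, mul_ite, mul_one, mul_zero]
    exact if_neg fun hkj => hk (Fin.ext hkj)

theorem commute_shiftMatrix_TL {m s : ℕ} (hs : 0 < s) (X : Matrix (Fin (m * s)) (Fin s) ℝ) :
    Commute (shiftMatrix (m * s) s) (TL hs X) := by
  ext i j
  rw [shiftMatrix_mul_apply, mul_shiftMatrix_apply]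
  by_cases hi : s ≤ (i : ℕ)
  · obtain ⟨k, hk⟩ : ∃ k, (i : ℕ) = k + s := ⟨i - s, by omega⟩
    by_cases hj : (j : ℕ) + s < m * s
    · simp [hj, TL, hk, Nat.add_div_right _ hs, Nat.add_mod_right]
    · have hj' : m ≤ (j : ℕ) / s + 1 := by
        rw [← Nat.add_div_right _ hs, Nat.le_div_iff_mul_le hs]; omega
      have hk' : k / s + 1 < m := by
        rw [← Nat.add_div_right _ hs, Nat.div_lt_iff_lt_mul hs, ← hk]; exact i.isLt
      simp only [hk, hj, TL, of_apply, add_tsub_cancel_right, le_add_iff_nonneg_left, zero_le,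
        ↓reduceDIte, ite_eq_right_iff]
      omega
  · have : (i : ℕ) / s = 0 := Nat.div_eq_of_lt (by omega)
    simp [hi, TL, this, Nat.add_div_right _ hs]

theorem TL_mul_transpose_TL_sub {m s : ℕ} (hs : 0 < s) (X Y : Matrix (Fin (m * s)) (Fin s) ℝ) :
    TL hs X * (TL hs Y)ᵀ - shiftMatrix (m * s) s * (TL hs X * (TL hs Y)ᵀ) *
      (shiftMatrix (m * s) s)ᵀ = X * Yᵀ := by
  simpa only [TL_mul_leadingUnitColumns] using
    mul_transpose_sub_mul_mul_transpose (commute_shiftMatrix_TL hs X)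
      (commute_shiftMatrix_TL hs Y) (shiftMatrix_mul_transpose _ _)

theorem block_toeplitz_displacement_representation_general {m s t : ℕ}
    (hs : 0 < s)
    (X Y : Fin t → Matrix (Fin (m * s)) (Fin s) ℝ) :
    ((∑ k, TL hs (X k) * (TL hs (Y k))ᵀ) -
        shiftMatrix (m * s) s * (∑ k, TL hs (X k) * (TL hs (Y k))ᵀ) *
          (shiftMatrix (m * s) s)ᵀ =
      ∑ k, X k * (Y k)ᵀ) ∧
    ∀ N : Matrix (Fin (m * s)) (Fin (m * s)) ℝ,
      ∃! M : Matrix (Fin (m * s)) (Fin (m * s)) ℝ,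
        M - shiftMatrix (m * s) s * M * (shiftMatrix (m * s) s)ᵀ = N := by
  refine ⟨?_, existsUnique_sub_mul_mul_transpose_eq (isNilpotent_shiftMatrix (m * s) hs)⟩
  rw [Finset.mul_sum, Finset.sum_mul, ← Finset.sum_sub_distrib]
  exact Finset.sum_congr rfl fun k _ => TL_mul_transpose_TL_sub hs (X k) (Y k)

/-- **Block triangular Toeplitz factorizations realize displacement representations.**
For block size `s ≥ 1` and block count `m ≥ 1`, and any `(ms)×s` matrices
`X⁽¹⁾,…,X⁽ᵗ⁾, Y⁽¹⁾,…,Y⁽ᵗ⁾`, the matrix `M = Σₖ T_L(X⁽ᵏ⁾)·T_L(Y⁽ᵏ⁾)ᵀ` is the unique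
matrix with `M − Δ(s)·M·Δ(s)ᵀ = Σₖ X⁽ᵏ⁾·(Y⁽ᵏ⁾)ᵀ`; in particular, for every `N` there is
exactly one `M` with `M − Δ(s)·M·Δ(s)ᵀ = N`. -/
theorem block_toeplitz_displacement_representation {m s t : ℕ}
    (hm : 1 ≤ m) (hs : 0 < s)
    (X Y : Fin t → Matrix (Fin (m * s)) (Fin s) ℝ) :
    ((∑ k, TL hs (X k) * (TL hs (Y k))ᵀ) -
        shiftMatrix (m * s) s * (∑ k, TL hs (X k) * (TL hs (Y k))ᵀ) *
          (shiftMatrix (m * s) s)ᵀ =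
      ∑ k, X k * (Y k)ᵀ) ∧
    ∀ N : Matrix (Fin (m * s)) (Fin (m * s)) ℝ,
      ∃! M : Matrix (Fin (m * s)) (Fin (m * s)) ℝ,
        M - shiftMatrix (m * s) s * M * (shiftMatrix (m * s) s)ᵀ = N :=
  block_toeplitz_displacement_representation_general hs X Y
end
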